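/- arXiv:1907.10415 — 5 statements merged into one kernel-verified Lean document; each statement's English description precedes it below -/
import Mathlib

section
/- Let Ψ be the 4×9 matrix over a field whose three 4×3 blocks are B₁ = [e₁, e₂, e₃], B₂ = [e₁, e₂, e₄], B₃ = [e₁, e₂, a·e₃ + b·e₄] with a, b nonzero scalars (degenerate configuration of three collinear centers for projections P³→P²). Define the 3×3×3 tensor T with profile (2,1,1) by signed maximal minors as for the trifocal tensor. Then the nonzero entries of T are exactly at positions (1,1,3), (1,3,1), (2,1,2), (2,2,1), (3,1,1), and the tensor rank of T equals 5. -/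
set_option maxHeartbeats 1000000


/-- Standard basis vector of K⁴. -/
def stdB (K : Type) [Field K] (i : Fin 4) : Fin 4 → K := fun r => if r = i then 1 else 0

/-- The matrix Ψ³_{2,2,2} for three collinear centers: blocks
[e₁,e₂,e₃], [e₁,e₂,e₄], [e₁,e₂, a·e₃+b·e₄]. -/
def PsiDeg (K : Type) [Field K] (a b : K) : Matrix (Fin 4) (Fin 9) K :=
  Matrix.of fun r c =>
    (![stdB K 0, stdB K 1, stdB K 2,
       stdB K 0, stdB K 1, stdB K 3,
       stdB K 0, stdB K 1, fun r => a * stdB K 2 r + b * stdB K 3 r] : Fin 9 → Fin 4 → K) c r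

/-- The two columns of a block of three complementary to a given one. -/
def compl3 : Fin 3 → Fin 2 → Fin 3 := ![![1,2], ![0,2], ![0,1]]

/-- The single column of a block of three complementary to the pair indexed by `j` in the
lexicographic order of pairs ((0,1), (0,2), (1,2)) — the Plücker (dual) index convention. -/
def keep3 : Fin 3 → Fin 3 := ![2, 1, 0]

/-- The (unsigned) maximal minor of Ψ³_{2,2,2} with profile (2,1,1), the columns of blocks 2 and 3
being selected by the Plücker dual indices j, k. -/
noncomputable def psiMinor (K : Type) [Field K] (a b : K) (i j k : Fin 3) : K :=
  Matrix.det (Matrix.of fun (r : Fin 4) (c : Fin 4) =>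
    PsiDeg K a b r
      (![Fin.castLE (by omega) (compl3 i 0),
         Fin.castLE (by omega) (compl3 i 1),
         ⟨3 + (keep3 j).val, by have := (keep3 j).isLt; omega⟩,
         ⟨6 + (keep3 k).val, by have := (keep3 k).isLt; omega⟩] c))


theorem my_det_fin_four {K : Type} [CommRing K] (A : Matrix (Fin 4) (Fin 4) K) :
    A.det =
      A 0 0 * (A 1 1 * (A 2 2 * A 3 3 - A 2 3 * A 3 2) - A 1 2 * (A 2 1 * A 3 3 - A 2 3 * A 3 1)
        + A 1 3 * (A 2 1 * A 3 2 - A 2 2 * A 3 1))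
    - A 0 1 * (A 1 0 * (A 2 2 * A 3 3 - A 2 3 * A 3 2) - A 1 2 * (A 2 0 * A 3 3 - A 2 3 * A 3 0)
        + A 1 3 * (A 2 0 * A 3 2 - A 2 2 * A 3 0))
    + A 0 2 * (A 1 0 * (A 2 1 * A 3 3 - A 2 3 * A 3 1) - A 1 1 * (A 2 0 * A 3 3 - A 2 3 * A 3 0)
        + A 1 3 * (A 2 0 * A 3 1 - A 2 1 * A 3 0))
    - A 0 3 * (A 1 0 * (A 2 1 * A 3 2 - A 2 2 * A 3 1) - A 1 1 * (A 2 0 * A 3 2 - A 2 2 * A 3 0)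
        + A 1 2 * (A 2 0 * A 3 1 - A 2 1 * A 3 0)) := by
  simp only [Matrix.det_succ_row_zero, Matrix.det_fin_three, Matrix.submatrix_apply,
    Fin.sum_univ_succ, Fin.val_zero, Fin.zero_succAbove, Finset.univ_unique,
    Fin.val_succ, Fin.succ_zero_eq_one, Fin.succ_one_eq_two,
    Fin.succ_succAbove_zero, Fin.succ_succAbove_one, Finset.sum_singleton, Finset.sum_empty,
    Fin.val_eq_zero, Fin.default_eq_zero]
  norm_num [Fin.succAbove, Fin.lt_def, show ((2:Fin 3).succ : Fin 4) = 3 from rfl,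
    show ((3:Fin 4).val) = 3 from rfl,
    show ((2:Fin 3).castSucc : Fin 4) = 2 from rfl, show ((1:Fin 3).castSucc : Fin 4) = 1 from rfl]
  ring

/-- The value table of the minors. -/
def minorVal (K : Type) [Field K] (a b : K) (i j k : Fin 3) : K :=
  if i = 0 ∧ j = 0 ∧ k = 2 then -1
  else if i = 0 ∧ j = 2 ∧ k = 0 then b
  else if i = 1 ∧ j = 0 ∧ k = 1 then 1
  else if i = 1 ∧ j = 1 ∧ k = 0 then -b
  else if i = 2 ∧ j = 0 ∧ k = 0 then -a
  else 0

theorem minor_eq (K : Type) [Field K] (a b : K) (i j k : Fin 3) :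
    psiMinor K a b i j k = minorVal K a b i j k := by
  have e000 : psiMinor K a b 0 0 0 = 0 := by
    have h : (Matrix.of fun (r : Fin 4) (c : Fin 4) =>
        PsiDeg K a b r
          (![Fin.castLE (by omega) (compl3 0 0),
             Fin.castLE (by omega) (compl3 0 1),
             ⟨3 + (keep3 0).val, by have := (keep3 0).isLt; omega⟩,
             ⟨6 + (keep3 0).val, by have := (keep3 0).isLt; omega⟩] c)) =
        !![(0:K),0,0,a * 0 + b * 0; 1,0,0,a * 0 + b * 0; 0,1,0,a * 1 + b * 0; 0,0,1,a * 0 + b * 1] := by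
      ext r c
      fin_cases r <;> fin_cases c <;> rfl
    rw [psiMinor, h, my_det_fin_four]
    simp [Matrix.vecHead, Matrix.vecTail]
  have e001 : psiMinor K a b 0 0 1 = 0 := by
    have h : (Matrix.of fun (r : Fin 4) (c : Fin 4) =>
        PsiDeg K a b r
          (![Fin.castLE (by omega) (compl3 0 0),
             Fin.castLE (by omega) (compl3 0 1),
             ⟨3 + (keep3 0).val, by have := (keep3 0).isLt; omega⟩,
             ⟨6 + (keep3 1).val, by have := (keep3 1).isLt; omega⟩] c)) =
        !![(0:K),0,0,0; 1,0,0,1; 0,1,0,0; 0,0,1,0] := by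
      ext r c
      fin_cases r <;> fin_cases c <;> rfl
    rw [psiMinor, h, my_det_fin_four]
    simp [Matrix.vecHead, Matrix.vecTail]
  have e002 : psiMinor K a b 0 0 2 = -1 := by
    have h : (Matrix.of fun (r : Fin 4) (c : Fin 4) =>
        PsiDeg K a b r
          (![Fin.castLE (by omega) (compl3 0 0),
             Fin.castLE (by omega) (compl3 0 1),
             ⟨3 + (keep3 0).val, by have := (keep3 0).isLt; omega⟩,
             ⟨6 + (keep3 2).val, by have := (keep3 2).isLt; omega⟩] c)) =
        !![(0:K),0,0,1; 1,0,0,0; 0,1,0,0; 0,0,1,0] := by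
      ext r c
      fin_cases r <;> fin_cases c <;> rfl
    rw [psiMinor, h, my_det_fin_four]
    simp [Matrix.vecHead, Matrix.vecTail]
  have e010 : psiMinor K a b 0 1 0 = 0 := by
    have h : (Matrix.of fun (r : Fin 4) (c : Fin 4) =>
        PsiDeg K a b r
          (![Fin.castLE (by omega) (compl3 0 0),
             Fin.castLE (by omega) (compl3 0 1),
             ⟨3 + (keep3 1).val, by have := (keep3 1).isLt; omega⟩,
             ⟨6 + (keep3 0).val, by have := (keep3 0).isLt; omega⟩] c)) =
        !![(0:K),0,0,a * 0 + b * 0; 1,0,1,a * 0 + b * 0; 0,1,0,a * 1 + b * 0; 0,0,0,a * 0 + b * 1] := by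
      ext r c
      fin_cases r <;> fin_cases c <;> rfl
    rw [psiMinor, h, my_det_fin_four]
    simp [Matrix.vecHead, Matrix.vecTail]
  have e011 : psiMinor K a b 0 1 1 = 0 := by
    have h : (Matrix.of fun (r : Fin 4) (c : Fin 4) =>
        PsiDeg K a b r
          (![Fin.castLE (by omega) (compl3 0 0),
             Fin.castLE (by omega) (compl3 0 1),
             ⟨3 + (keep3 1).val, by have := (keep3 1).isLt; omega⟩,
             ⟨6 + (keep3 1).val, by have := (keep3 1).isLt; omega⟩] c)) =
        !![(0:K),0,0,0; 1,0,1,1; 0,1,0,0; 0,0,0,0] := by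
      ext r c
      fin_cases r <;> fin_cases c <;> rfl
    rw [psiMinor, h, my_det_fin_four]
    simp [Matrix.vecHead, Matrix.vecTail]
  have e012 : psiMinor K a b 0 1 2 = 0 := by
    have h : (Matrix.of fun (r : Fin 4) (c : Fin 4) =>
        PsiDeg K a b r
          (![Fin.castLE (by omega) (compl3 0 0),
             Fin.castLE (by omega) (compl3 0 1),
             ⟨3 + (keep3 1).val, by have := (keep3 1).isLt; omega⟩,
             ⟨6 + (keep3 2).val, by have := (keep3 2).isLt; omega⟩] c)) =
        !![(0:K),0,0,1; 1,0,1,0; 0,1,0,0; 0,0,0,0] := by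
      ext r c
      fin_cases r <;> fin_cases c <;> rfl
    rw [psiMinor, h, my_det_fin_four]
    simp [Matrix.vecHead, Matrix.vecTail]
  have e020 : psiMinor K a b 0 2 0 = b := by
    have h : (Matrix.of fun (r : Fin 4) (c : Fin 4) =>
        PsiDeg K a b r
          (![Fin.castLE (by omega) (compl3 0 0),
             Fin.castLE (by omega) (compl3 0 1),
             ⟨3 + (keep3 2).val, by have := (keep3 2).isLt; omega⟩,
             ⟨6 + (keep3 0).val, by have := (keep3 0).isLt; omega⟩] c)) =
        !![(0:K),0,1,a * 0 + b * 0; 1,0,0,a * 0 + b * 0; 0,1,0,a * 1 + b * 0; 0,0,0,a * 0 + b * 1] := by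
      ext r c
      fin_cases r <;> fin_cases c <;> rfl
    rw [psiMinor, h, my_det_fin_four]
    simp [Matrix.vecHead, Matrix.vecTail]
  have e021 : psiMinor K a b 0 2 1 = 0 := by
    have h : (Matrix.of fun (r : Fin 4) (c : Fin 4) =>
        PsiDeg K a b r
          (![Fin.castLE (by omega) (compl3 0 0),
             Fin.castLE (by omega) (compl3 0 1),
             ⟨3 + (keep3 2).val, by have := (keep3 2).isLt; omega⟩,
             ⟨6 + (keep3 1).val, by have := (keep3 1).isLt; omega⟩] c)) =
        !![(0:K),0,1,0; 1,0,0,1; 0,1,0,0; 0,0,0,0] := by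
      ext r c
      fin_cases r <;> fin_cases c <;> rfl
    rw [psiMinor, h, my_det_fin_four]
    simp [Matrix.vecHead, Matrix.vecTail]
  have e022 : psiMinor K a b 0 2 2 = 0 := by
    have h : (Matrix.of fun (r : Fin 4) (c : Fin 4) =>
        PsiDeg K a b r
          (![Fin.castLE (by omega) (compl3 0 0),
             Fin.castLE (by omega) (compl3 0 1),
             ⟨3 + (keep3 2).val, by have := (keep3 2).isLt; omega⟩,
             ⟨6 + (keep3 2).val, by have := (keep3 2).isLt; omega⟩] c)) =
        !![(0:K),0,1,1; 1,0,0,0; 0,1,0,0; 0,0,0,0] := by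
      ext r c
      fin_cases r <;> fin_cases c <;> rfl
    rw [psiMinor, h, my_det_fin_four]
    simp [Matrix.vecHead, Matrix.vecTail]
  have e100 : psiMinor K a b 1 0 0 = 0 := by
    have h : (Matrix.of fun (r : Fin 4) (c : Fin 4) =>
        PsiDeg K a b r
          (![Fin.castLE (by omega) (compl3 1 0),
             Fin.castLE (by omega) (compl3 1 1),
             ⟨3 + (keep3 0).val, by have := (keep3 0).isLt; omega⟩,
             ⟨6 + (keep3 0).val, by have := (keep3 0).isLt; omega⟩] c)) =
        !![(1:K),0,0,a * 0 + b * 0; 0,0,0,a * 0 + b * 0; 0,1,0,a * 1 + b * 0; 0,0,1,a * 0 + b * 1] := by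
      ext r c
      fin_cases r <;> fin_cases c <;> rfl
    rw [psiMinor, h, my_det_fin_four]
    simp [Matrix.vecHead, Matrix.vecTail]
  have e101 : psiMinor K a b 1 0 1 = 1 := by
    have h : (Matrix.of fun (r : Fin 4) (c : Fin 4) =>
        PsiDeg K a b r
          (![Fin.castLE (by omega) (compl3 1 0),
             Fin.castLE (by omega) (compl3 1 1),
             ⟨3 + (keep3 0).val, by have := (keep3 0).isLt; omega⟩,
             ⟨6 + (keep3 1).val, by have := (keep3 1).isLt; omega⟩] c)) =
        !![(1:K),0,0,0; 0,0,0,1; 0,1,0,0; 0,0,1,0] := by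
      ext r c
      fin_cases r <;> fin_cases c <;> rfl
    rw [psiMinor, h, my_det_fin_four]
    simp [Matrix.vecHead, Matrix.vecTail]
  have e102 : psiMinor K a b 1 0 2 = 0 := by
    have h : (Matrix.of fun (r : Fin 4) (c : Fin 4) =>
        PsiDeg K a b r
          (![Fin.castLE (by omega) (compl3 1 0),
             Fin.castLE (by omega) (compl3 1 1),
             ⟨3 + (keep3 0).val, by have := (keep3 0).isLt; omega⟩,
             ⟨6 + (keep3 2).val, by have := (keep3 2).isLt; omega⟩] c)) =
        !![(1:K),0,0,1; 0,0,0,0; 0,1,0,0; 0,0,1,0] := by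
      ext r c
      fin_cases r <;> fin_cases c <;> rfl
    rw [psiMinor, h, my_det_fin_four]
    simp [Matrix.vecHead, Matrix.vecTail]
  have e110 : psiMinor K a b 1 1 0 = -b := by
    have h : (Matrix.of fun (r : Fin 4) (c : Fin 4) =>
        PsiDeg K a b r
          (![Fin.castLE (by omega) (compl3 1 0),
             Fin.castLE (by omega) (compl3 1 1),
             ⟨3 + (keep3 1).val, by have := (keep3 1).isLt; omega⟩,
             ⟨6 + (keep3 0).val, by have := (keep3 0).isLt; omega⟩] c)) =
        !![(1:K),0,0,a * 0 + b * 0; 0,0,1,a * 0 + b * 0; 0,1,0,a * 1 + b * 0; 0,0,0,a * 0 + b * 1] := by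
      ext r c
      fin_cases r <;> fin_cases c <;> rfl
    rw [psiMinor, h, my_det_fin_four]
    simp [Matrix.vecHead, Matrix.vecTail]
  have e111 : psiMinor K a b 1 1 1 = 0 := by
    have h : (Matrix.of fun (r : Fin 4) (c : Fin 4) =>
        PsiDeg K a b r
          (![Fin.castLE (by omega) (compl3 1 0),
             Fin.castLE (by omega) (compl3 1 1),
             ⟨3 + (keep3 1).val, by have := (keep3 1).isLt; omega⟩,
             ⟨6 + (keep3 1).val, by have := (keep3 1).isLt; omega⟩] c)) =
        !![(1:K),0,0,0; 0,0,1,1; 0,1,0,0; 0,0,0,0] := by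
      ext r c
      fin_cases r <;> fin_cases c <;> rfl
    rw [psiMinor, h, my_det_fin_four]
    simp [Matrix.vecHead, Matrix.vecTail]
  have e112 : psiMinor K a b 1 1 2 = 0 := by
    have h : (Matrix.of fun (r : Fin 4) (c : Fin 4) =>
        PsiDeg K a b r
          (![Fin.castLE (by omega) (compl3 1 0),
             Fin.castLE (by omega) (compl3 1 1),
             ⟨3 + (keep3 1).val, by have := (keep3 1).isLt; omega⟩,
             ⟨6 + (keep3 2).val, by have := (keep3 2).isLt; omega⟩] c)) =
        !![(1:K),0,0,1; 0,0,1,0; 0,1,0,0; 0,0,0,0] := by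
      ext r c
      fin_cases r <;> fin_cases c <;> rfl
    rw [psiMinor, h, my_det_fin_four]
    simp [Matrix.vecHead, Matrix.vecTail]
  have e120 : psiMinor K a b 1 2 0 = 0 := by
    have h : (Matrix.of fun (r : Fin 4) (c : Fin 4) =>
        PsiDeg K a b r
          (![Fin.castLE (by omega) (compl3 1 0),
             Fin.castLE (by omega) (compl3 1 1),
             ⟨3 + (keep3 2).val, by have := (keep3 2).isLt; omega⟩,
             ⟨6 + (keep3 0).val, by have := (keep3 0).isLt; omega⟩] c)) =
        !![(1:K),0,1,a * 0 + b * 0; 0,0,0,a * 0 + b * 0; 0,1,0,a * 1 + b * 0; 0,0,0,a * 0 + b * 1] := by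
      ext r c
      fin_cases r <;> fin_cases c <;> rfl
    rw [psiMinor, h, my_det_fin_four]
    simp [Matrix.vecHead, Matrix.vecTail]
  have e121 : psiMinor K a b 1 2 1 = 0 := by
    have h : (Matrix.of fun (r : Fin 4) (c : Fin 4) =>
        PsiDeg K a b r
          (![Fin.castLE (by omega) (compl3 1 0),
             Fin.castLE (by omega) (compl3 1 1),
             ⟨3 + (keep3 2).val, by have := (keep3 2).isLt; omega⟩,
             ⟨6 + (keep3 1).val, by have := (keep3 1).isLt; omega⟩] c)) =
        !![(1:K),0,1,0; 0,0,0,1; 0,1,0,0; 0,0,0,0] := by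
      ext r c
      fin_cases r <;> fin_cases c <;> rfl
    rw [psiMinor, h, my_det_fin_four]
    simp [Matrix.vecHead, Matrix.vecTail]
  have e122 : psiMinor K a b 1 2 2 = 0 := by
    have h : (Matrix.of fun (r : Fin 4) (c : Fin 4) =>
        PsiDeg K a b r
          (![Fin.castLE (by omega) (compl3 1 0),
             Fin.castLE (by omega) (compl3 1 1),
             ⟨3 + (keep3 2).val, by have := (keep3 2).isLt; omega⟩,
             ⟨6 + (keep3 2).val, by have := (keep3 2).isLt; omega⟩] c)) =
        !![(1:K),0,1,1; 0,0,0,0; 0,1,0,0; 0,0,0,0] := by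
      ext r c
      fin_cases r <;> fin_cases c <;> rfl
    rw [psiMinor, h, my_det_fin_four]
    simp [Matrix.vecHead, Matrix.vecTail]
  have e200 : psiMinor K a b 2 0 0 = -a := by
    have h : (Matrix.of fun (r : Fin 4) (c : Fin 4) =>
        PsiDeg K a b r
          (![Fin.castLE (by omega) (compl3 2 0),
             Fin.castLE (by omega) (compl3 2 1),
             ⟨3 + (keep3 0).val, by have := (keep3 0).isLt; omega⟩,
             ⟨6 + (keep3 0).val, by have := (keep3 0).isLt; omega⟩] c)) =
        !![(1:K),0,0,a * 0 + b * 0; 0,1,0,a * 0 + b * 0; 0,0,0,a * 1 + b * 0; 0,0,1,a * 0 + b * 1] := by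
      ext r c
      fin_cases r <;> fin_cases c <;> rfl
    rw [psiMinor, h, my_det_fin_four]
    simp [Matrix.vecHead, Matrix.vecTail]
  have e201 : psiMinor K a b 2 0 1 = 0 := by
    have h : (Matrix.of fun (r : Fin 4) (c : Fin 4) =>
        PsiDeg K a b r
          (![Fin.castLE (by omega) (compl3 2 0),
             Fin.castLE (by omega) (compl3 2 1),
             ⟨3 + (keep3 0).val, by have := (keep3 0).isLt; omega⟩,
             ⟨6 + (keep3 1).val, by have := (keep3 1).isLt; omega⟩] c)) =
        !![(1:K),0,0,0; 0,1,0,1; 0,0,0,0; 0,0,1,0] := by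
      ext r c
      fin_cases r <;> fin_cases c <;> rfl
    rw [psiMinor, h, my_det_fin_four]
    simp [Matrix.vecHead, Matrix.vecTail]
  have e202 : psiMinor K a b 2 0 2 = 0 := by
    have h : (Matrix.of fun (r : Fin 4) (c : Fin 4) =>
        PsiDeg K a b r
          (![Fin.castLE (by omega) (compl3 2 0),
             Fin.castLE (by omega) (compl3 2 1),
             ⟨3 + (keep3 0).val, by have := (keep3 0).isLt; omega⟩,
             ⟨6 + (keep3 2).val, by have := (keep3 2).isLt; omega⟩] c)) =
        !![(1:K),0,0,1; 0,1,0,0; 0,0,0,0; 0,0,1,0] := by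
      ext r c
      fin_cases r <;> fin_cases c <;> rfl
    rw [psiMinor, h, my_det_fin_four]
    simp [Matrix.vecHead, Matrix.vecTail]
  have e210 : psiMinor K a b 2 1 0 = 0 := by
    have h : (Matrix.of fun (r : Fin 4) (c : Fin 4) =>
        PsiDeg K a b r
          (![Fin.castLE (by omega) (compl3 2 0),
             Fin.castLE (by omega) (compl3 2 1),
             ⟨3 + (keep3 1).val, by have := (keep3 1).isLt; omega⟩,
             ⟨6 + (keep3 0).val, by have := (keep3 0).isLt; omega⟩] c)) =
        !![(1:K),0,0,a * 0 + b * 0; 0,1,1,a * 0 + b * 0; 0,0,0,a * 1 + b * 0; 0,0,0,a * 0 + b * 1] := by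
      ext r c
      fin_cases r <;> fin_cases c <;> rfl
    rw [psiMinor, h, my_det_fin_four]
    simp [Matrix.vecHead, Matrix.vecTail]
  have e211 : psiMinor K a b 2 1 1 = 0 := by
    have h : (Matrix.of fun (r : Fin 4) (c : Fin 4) =>
        PsiDeg K a b r
          (![Fin.castLE (by omega) (compl3 2 0),
             Fin.castLE (by omega) (compl3 2 1),
             ⟨3 + (keep3 1).val, by have := (keep3 1).isLt; omega⟩,
             ⟨6 + (keep3 1).val, by have := (keep3 1).isLt; omega⟩] c)) =
        !![(1:K),0,0,0; 0,1,1,1; 0,0,0,0; 0,0,0,0] := by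
      ext r c
      fin_cases r <;> fin_cases c <;> rfl
    rw [psiMinor, h, my_det_fin_four]
    simp [Matrix.vecHead, Matrix.vecTail]
  have e212 : psiMinor K a b 2 1 2 = 0 := by
    have h : (Matrix.of fun (r : Fin 4) (c : Fin 4) =>
        PsiDeg K a b r
          (![Fin.castLE (by omega) (compl3 2 0),
             Fin.castLE (by omega) (compl3 2 1),
             ⟨3 + (keep3 1).val, by have := (keep3 1).isLt; omega⟩,
             ⟨6 + (keep3 2).val, by have := (keep3 2).isLt; omega⟩] c)) =
        !![(1:K),0,0,1; 0,1,1,0; 0,0,0,0; 0,0,0,0] := by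
      ext r c
      fin_cases r <;> fin_cases c <;> rfl
    rw [psiMinor, h, my_det_fin_four]
    simp [Matrix.vecHead, Matrix.vecTail]
  have e220 : psiMinor K a b 2 2 0 = 0 := by
    have h : (Matrix.of fun (r : Fin 4) (c : Fin 4) =>
        PsiDeg K a b r
          (![Fin.castLE (by omega) (compl3 2 0),
             Fin.castLE (by omega) (compl3 2 1),
             ⟨3 + (keep3 2).val, by have := (keep3 2).isLt; omega⟩,
             ⟨6 + (keep3 0).val, by have := (keep3 0).isLt; omega⟩] c)) =
        !![(1:K),0,1,a * 0 + b * 0; 0,1,0,a * 0 + b * 0; 0,0,0,a * 1 + b * 0; 0,0,0,a * 0 + b * 1] := by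
      ext r c
      fin_cases r <;> fin_cases c <;> rfl
    rw [psiMinor, h, my_det_fin_four]
    simp [Matrix.vecHead, Matrix.vecTail]
  have e221 : psiMinor K a b 2 2 1 = 0 := by
    have h : (Matrix.of fun (r : Fin 4) (c : Fin 4) =>
        PsiDeg K a b r
          (![Fin.castLE (by omega) (compl3 2 0),
             Fin.castLE (by omega) (compl3 2 1),
             ⟨3 + (keep3 2).val, by have := (keep3 2).isLt; omega⟩,
             ⟨6 + (keep3 1).val, by have := (keep3 1).isLt; omega⟩] c)) =
        !![(1:K),0,1,0; 0,1,0,1; 0,0,0,0; 0,0,0,0] := by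
      ext r c
      fin_cases r <;> fin_cases c <;> rfl
    rw [psiMinor, h, my_det_fin_four]
    simp [Matrix.vecHead, Matrix.vecTail]
  have e222 : psiMinor K a b 2 2 2 = 0 := by
    have h : (Matrix.of fun (r : Fin 4) (c : Fin 4) =>
        PsiDeg K a b r
          (![Fin.castLE (by omega) (compl3 2 0),
             Fin.castLE (by omega) (compl3 2 1),
             ⟨3 + (keep3 2).val, by have := (keep3 2).isLt; omega⟩,
             ⟨6 + (keep3 2).val, by have := (keep3 2).isLt; omega⟩] c)) =
        !![(1:K),0,1,1; 0,1,0,0; 0,0,0,0; 0,0,0,0] := by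
      ext r c
      fin_cases r <;> fin_cases c <;> rfl
    rw [psiMinor, h, my_det_fin_four]
    simp [Matrix.vecHead, Matrix.vecTail]
  fin_cases i <;> fin_cases j <;> fin_cases k
  exacts [e000, e001, e002, e010, e011, e012, e020, e021, e022, e100, e101, e102, e110, e111, e112, e120, e121, e122, e200, e201, e202, e210, e211, e212, e220, e221, e222]

/-- Tensor rank: minimal number of decomposable tensors u ⊗ v ⊗ w summing to T. -/
noncomputable def tensorRank {K : Type} [Field K] {a b c : ℕ}
    (T : Fin a → Fin b → Fin c → K) : ℕ :=
  sInf {r | ∃ (u : Fin r → Fin a → K) (v : Fin r → Fin b → K) (w : Fin r → Fin c → K),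
    ∀ i j k, T i j k = ∑ p, u p i * v p j * w p k}


/-- the degenerate trifocal tensor for three collinear centers (signed maximal
minors of Ψ³_{2,2,2}, a,b ≠ 0, any choice of signs) has exactly the nonzero entries
(1,1,3), (1,3,1), (2,1,2), (2,2,1), (3,1,1) (1-based), and its tensor rank is 5. -/
theorem stmt_5 {K : Type} [Field K] [CharZero K] (a b : K) (ha : a ≠ 0) (hb : b ≠ 0)
    (ε : Fin 3 → Fin 3 → Fin 3 → K)
    (hε : ∀ i j k, ε i j k = 1 ∨ ε i j k = -1)
    (T : Fin 3 → Fin 3 → Fin 3 → K)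
    (hT : ∀ i j k, T i j k = ε i j k * psiMinor K a b i j k) :
    (∀ i j k, T i j k ≠ 0 ↔
      ((i, j, k) = (0, 0, 2) ∨ (i, j, k) = (0, 2, 0) ∨
       (i, j, k) = (1, 0, 1) ∨ (i, j, k) = (1, 1, 0) ∨ (i, j, k) = (2, 0, 0))) ∧
    tensorRank T = 5 := by
  have hε0 : ∀ i j k, ε i j k ≠ 0 := by
    intro i j k
    rcases hε i j k with h | h <;> rw [h]
    · exact one_ne_zero
    · exact neg_ne_zero.mpr one_ne_zero
  have hiff : ∀ i j k, T i j k ≠ 0 ↔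
      ((i, j, k) = (0, 0, 2) ∨ (i, j, k) = (0, 2, 0) ∨
       (i, j, k) = (1, 0, 1) ∨ (i, j, k) = (1, 1, 0) ∨ (i, j, k) = (2, 0, 0)) := by
    intro i j k
    rw [hT i j k, minor_eq K a b i j k]
    fin_cases i <;> fin_cases j <;> fin_cases k <;>
      simp [minorVal, mul_ne_zero_iff, hε0, ha, hb, Prod.ext_iff, neg_eq_zero]
  refine ⟨hiff, ?_⟩
  have hz : ∀ i j k, ¬((i, j, k) = ((0:Fin 3), (0:Fin 3), (2:Fin 3)) ∨ (i, j, k) = (0, 2, 0) ∨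
       (i, j, k) = (1, 0, 1) ∨ (i, j, k) = (1, 1, 0) ∨ (i, j, k) = (2, 0, 0)) → T i j k = 0 := by
    intro i j k h
    by_contra h0
    exact h ((hiff i j k).mp h0)
  have h002 : T 0 0 2 ≠ 0 := (hiff 0 0 2).mpr (by norm_num)
  have h020 : T 0 2 0 ≠ 0 := (hiff 0 2 0).mpr (by norm_num)
  have h101 : T 1 0 1 ≠ 0 := (hiff 1 0 1).mpr (by norm_num)
  have h110 : T 1 1 0 ≠ 0 := (hiff 1 1 0).mpr (by norm_num)
  have h200 : T 2 0 0 ≠ 0 := (hiff 2 0 0).mpr (by norm_num)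
  have mem5 : 5 ∈ {r | ∃ (u : Fin r → Fin 3 → K) (v : Fin r → Fin 3 → K)
      (w : Fin r → Fin 3 → K), ∀ i j k, T i j k = ∑ p, u p i * v p j * w p k} := by
    refine ⟨![![T 0 0 2,0,0], ![T 0 2 0,0,0], ![0,T 1 0 1,0], ![0,T 1 1 0,0], ![0,0,T 2 0 0]],
            ![![1,0,0], ![0,0,1], ![1,0,0], ![0,1,0], ![1,0,0]],
            ![![0,0,1], ![1,0,0], ![0,1,0], ![1,0,0], ![1,0,0]], ?_⟩
    intro i j k
    fin_cases i <;> fin_cases j <;> fin_cases k <;>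
      simp [Fin.sum_univ_five, Matrix.vecHead, Matrix.vecTail, Function.comp] <;>
      (apply hz; decide)
  have hlb : ∀ m ∈ {r | ∃ (u : Fin r → Fin 3 → K) (v : Fin r → Fin 3 → K)
      (w : Fin r → Fin 3 → K), ∀ i j k, T i j k = ∑ p, u p i * v p j * w p k}, 5 ≤ m := by
    rintro m ⟨u, v, w, hd⟩
    by_contra hlt
    push_neg at hlt
    have hm4 : m ≤ 4 := by omega
    -- zero entries used below
    have z201 : T 2 0 1 = 0 := hz 2 0 1 (by decide)
    have z202 : T 2 0 2 = 0 := hz 2 0 2 (by decide)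
    have z210 : T 2 1 0 = 0 := hz 2 1 0 (by decide)
    have z211 : T 2 1 1 = 0 := hz 2 1 1 (by decide)
    have z212 : T 2 1 2 = 0 := hz 2 1 2 (by decide)
    have z220 : T 2 2 0 = 0 := hz 2 2 0 (by decide)
    have z221 : T 2 2 1 = 0 := hz 2 2 1 (by decide)
    have z222 : T 2 2 2 = 0 := hz 2 2 2 (by decide)
    have z120 : T 1 2 0 = 0 := hz 1 2 0 (by decide)
    have z121 : T 1 2 1 = 0 := hz 1 2 1 (by decide)
    have z122 : T 1 2 2 = 0 := hz 1 2 2 (by decide)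
    have z102 : T 1 0 2 = 0 := hz 1 0 2 (by decide)
    have z112 : T 1 1 2 = 0 := hz 1 1 2 (by decide)
    have z111 : T 1 1 1 = 0 := hz 1 1 1 (by decide)
    have z022 : T 0 2 2 = 0 := hz 0 2 2 (by decide)
    -- step 1 : substitution in the first mode
    have hc5 : (∑ p : Fin m, u p 2 * v p 0 * w p 0) ≠ 0 := by rw [← hd 2 0 0]; exact h200
    obtain ⟨p0, -, hp0⟩ := Finset.exists_ne_zero_of_sum_ne_zero hc5
    have hu2 : u p0 2 ≠ 0 := fun h => hp0 (by simp [h])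
    set α : Fin 3 → K := fun i => u p0 i / u p0 2 with hα
    set u1 : Fin m → Fin 3 → K := fun p i => u p i - α i * u p 2 with hu1
    have hu1p0 : ∀ i, u1 p0 i = 0 := by
      intro i
      simp only [hu1, hα]
      field_simp
      simp
    set S1 : Finset (Fin m) := Finset.univ.erase p0 with hS1
    have h1 : ∀ i j k, T i j k - α i * T 2 j k = ∑ p ∈ S1, u1 p i * v p j * w p k := by
      intro i j k
      rw [hS1, Finset.sum_erase _ (by simp [hu1p0 i]), hd i j k, hd 2 j k, Finset.mul_sum,
        ← Finset.sum_sub_distrib]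
      exact Finset.sum_congr rfl fun p _ => by simp only [hu1]; ring
    -- step 2 : substitution in the second mode
    have hc2 : (∑ p ∈ S1, u1 p 0 * v p 2 * w p 0) ≠ 0 := by
      rw [← h1 0 2 0, z220]
      simpa using h020
    obtain ⟨p1, hp1S, hp1⟩ := Finset.exists_ne_zero_of_sum_ne_zero hc2
    have hv2 : v p1 2 ≠ 0 := fun h => hp1 (by simp [h])
    set β : Fin 3 → K := fun j => v p1 j / v p1 2 with hβ
    set v1 : Fin m → Fin 3 → K := fun p j => v p j - β j * v p 2 with hv1
    have hv1p1 : ∀ j, v1 p1 j = 0 := by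
      intro j
      simp only [hv1, hβ]
      field_simp
      simp
    set S2 : Finset (Fin m) := S1.erase p1 with hS2
    have h2 : ∀ i j k, (T i j k - α i * T 2 j k) - β j * (T i 2 k - α i * T 2 2 k)
        = ∑ p ∈ S2, u1 p i * v1 p j * w p k := by
      intro i j k
      rw [hS2, Finset.sum_erase _ (by simp [hv1p1 j]), h1 i j k, h1 i 2 k, Finset.mul_sum,
        ← Finset.sum_sub_distrib]
      exact Finset.sum_congr rfl fun p _ => by simp only [hv1]; ring
    -- step 3 : substitution in the third mode
    have hc1 : (∑ p ∈ S2, u1 p 0 * v1 p 0 * w p 2) ≠ 0 := by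
      rw [← h2 0 0 2, z202, z022, z222]
      simpa using h002
    obtain ⟨p2, hp2S, hp2⟩ := Finset.exists_ne_zero_of_sum_ne_zero hc1
    have hw2 : w p2 2 ≠ 0 := fun h => hp2 (by simp [h])
    set γ : Fin 3 → K := fun k => w p2 k / w p2 2 with hγ
    set w1 : Fin m → Fin 3 → K := fun p k => w p k - γ k * w p 2 with hw1
    have hw1p2 : ∀ k, w1 p2 k = 0 := by
      intro k
      simp only [hw1, hγ]
      field_simp
      simp
    set S3 : Finset (Fin m) := S2.erase p2 with hS3
    have h3 : ∀ i j k, ((T i j k - α i * T 2 j k) - β j * (T i 2 k - α i * T 2 2 k))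
        - γ k * ((T i j 2 - α i * T 2 j 2) - β j * (T i 2 2 - α i * T 2 2 2))
        = ∑ p ∈ S3, u1 p i * v1 p j * w1 p k := by
      intro i j k
      rw [hS3, Finset.sum_erase _ (by simp [hw1p2 k]), h2 i j k, h2 i j 2, Finset.mul_sum,
        ← Finset.sum_sub_distrib]
      exact Finset.sum_congr rfl fun p _ => by simp only [hw1]; ring
    -- the three key values of the reduced tensor
    have E1 : T 1 0 1 = ∑ p ∈ S3, u1 p 1 * v1 p 0 * w1 p 1 := by
      rw [← h3 1 0 1, z201, z121, z221, z102, z202, z122, z222]; ring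
    have E2 : T 1 1 0 = ∑ p ∈ S3, u1 p 1 * v1 p 1 * w1 p 0 := by
      rw [← h3 1 1 0, z210, z120, z220, z112, z212, z122, z222]; ring
    have E3 : (0 : K) = ∑ p ∈ S3, u1 p 1 * v1 p 1 * w1 p 1 := by
      rw [← h3 1 1 1, z111, z211, z121, z221, z112, z212, z122, z222]; ring
    -- S3 has at most one element
    have hcard : S3.card ≤ 1 := by
      have c1 : S1.card = m - 1 := by
        rw [hS1, Finset.card_erase_of_mem (Finset.mem_univ p0), Finset.card_univ, Fintype.card_fin]
      have c2 : S2.card = S1.card - 1 := by rw [hS2, Finset.card_erase_of_mem hp1S]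
      have c3 : S3.card = S2.card - 1 := by rw [hS3, Finset.card_erase_of_mem hp2S]
      omega
    rcases S3.eq_empty_or_nonempty with hS3e | ⟨q, hq⟩
    · rw [hS3e, Finset.sum_empty] at E1
      exact h101 E1
    · have hsing : S3 = {q} := by
        apply Finset.eq_singleton_iff_unique_mem.mpr
        exact ⟨hq, fun x hx => Finset.card_le_one.mp hcard x hx q hq⟩
      rw [hsing, Finset.sum_singleton] at E1 E2 E3
      have f1 : u1 q 1 ≠ 0 := fun h => h101 (by rw [E1, h]; ring)
      have f2 : w1 q 1 ≠ 0 := fun h => h101 (by rw [E1, h]; ring)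
      have f3 : v1 q 1 ≠ 0 := fun h => h110 (by rw [E2, h]; ring)
      exact mul_ne_zero (mul_ne_zero f1 f3) f2 E3.symm
  exact le_antisymm (Nat.sInf_le mem5) (le_csInf ⟨5, mem5⟩ hlb)
end

section
/- The 3×3×3 tensor T = e₁⊗e₁⊗e₃ + e₁⊗(e₂+e₃)⊗e₁ + e₂⊗e₁⊗e₂ + e₃⊗e₁⊗e₁ over a field has tensor rank exactly 4. -/
open Polynomial Matrix Finset

/-- Standard basis of K³. -/
def e (K : Type) [Field K] (i : Fin 3) : Fin 3 → K := fun r => if r = i then 1 else 0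

/-- Padding a sum over `Fin r` to a sum over `Fin s`, `r ≤ s`. -/
lemma sum_pad {M : Type} [AddCommMonoid M] {r s : ℕ} (hrs : r ≤ s) (f : Fin r → M) :
    (∑ p : Fin s, if h : (p : ℕ) < r then f ⟨p, h⟩ else 0) = ∑ p : Fin r, f p := by
  rw [Fin.sum_univ_eq_sum_range (fun n => if h : n < r then f ⟨n, h⟩ else 0) s,
    ← Finset.sum_subset (Finset.range_subset_range.mpr hrs)
      (fun x _ hx => dif_neg (by simpa using hx)),
    ← Fin.sum_univ_eq_sum_range (fun n => if h : n < r then f ⟨n, h⟩ else 0) r]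
  exact Finset.sum_congr rfl fun p _ => dif_pos p.isLt

/-- If a tensor has a decomposition with `r` terms then it has one with `s ≥ r` terms. -/
lemma mem_mono {K : Type} [Field K] {a b c : ℕ} (T : Fin a → Fin b → Fin c → K)
    {r s : ℕ} (hrs : r ≤ s)
    (hr : r ∈ {r | ∃ (u : Fin r → Fin a → K) (v : Fin r → Fin b → K) (w : Fin r → Fin c → K),
      ∀ i j k, T i j k = ∑ p, u p i * v p j * w p k}) :
    s ∈ {r | ∃ (u : Fin r → Fin a → K) (v : Fin r → Fin b → K) (w : Fin r → Fin c → K),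
      ∀ i j k, T i j k = ∑ p, u p i * v p j * w p k} := by
  obtain ⟨u, v, w, h⟩ := hr
  refine ⟨fun p i => if h : (p : ℕ) < r then u ⟨p, h⟩ i else 0,
          fun p j => if h : (p : ℕ) < r then v ⟨p, h⟩ j else 0,
          fun p k => if h : (p : ℕ) < r then w ⟨p, h⟩ k else 0, fun i j k => ?_⟩
  rw [h i j k, ← sum_pad hrs (fun q : Fin r => u q i * v q j * w q k)]
  refine Finset.sum_congr rfl fun p _ => ?_
  by_cases hp : (p : ℕ) < r <;> simp [hp]

/-- The core lower-bound argument: no 3-term decomposition exists. -/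
lemma no_rank_three {K : Type} [Field K] (u v w : Fin 3 → Fin 3 → K)
    (h : ∀ i j k : Fin 3, (∑ p : Fin 3, u p i * v p j * w p k) =
      e K 0 i * e K 0 j * e K 2 k
      + e K 0 i * (e K 1 j + e K 2 j) * e K 0 k
      + e K 1 i * e K 0 j * e K 1 k
      + e K 2 i * e K 0 j * e K 0 k) : False := by
  classical
  set U : Matrix (Fin 3) (Fin 3) K[X] := Matrix.of fun i p => C (u p i) with hU
  set W : Matrix (Fin 3) (Fin 3) K[X] := Matrix.of fun p k => C (w p k) with hW
  set d : Fin 3 → K[X] := fun p => C (v p 0) + X * C (v p 1) with hd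
  -- entrywise computation of U * diagonal d * W
  have hN : U * Matrix.diagonal d * W = !![X, 0, 1; 0, 1, 0; 1, 0, 0] := by
    refine Matrix.ext fun i k => ?_
    have key : (U * Matrix.diagonal d * W) i k =
        C (∑ p : Fin 3, u p i * v p 0 * w p k)
        + X * C (∑ p : Fin 3, u p i * v p 1 * w p k) := by
      rw [Matrix.mul_apply]
      simp only [Matrix.mul_diagonal, hU, hW, hd, Matrix.of_apply, map_sum]
      rw [Finset.mul_sum, ← Finset.sum_add_distrib]
      refine Finset.sum_congr rfl fun p _ => ?_
      simp only [_root_.map_mul]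
      ring
    rw [key, h i 0 k, h i 1 k]
    fin_cases i <;> fin_cases k <;>
      simp [e, Matrix.vecHead, Matrix.vecTail]
  -- determinant of both sides
  have hdet : (U.det * W.det) * ∏ p : Fin 3, d p = -1 := by
    have h1 : (U * Matrix.diagonal d * W).det = (U.det * W.det) * ∏ p : Fin 3, d p := by
      rw [Matrix.det_mul, Matrix.det_mul, Matrix.det_diagonal]; ring
    rw [← h1, hN]
    simp [Matrix.det_fin_three, Matrix.vecHead, Matrix.vecTail]
  -- each d p is a unit, hence constant, hence v p 1 = 0
  have hv1 : ∀ p : Fin 3, v p 1 = 0 := by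
    intro p
    have hdvd : d p ∣ (-1 : K[X]) := by
      rw [← hdet]
      exact Dvd.dvd.mul_left (Finset.dvd_prod_of_mem d (Finset.mem_univ p)) _
    have hunit : IsUnit (d p) := isUnit_of_dvd_unit hdvd isUnit_one.neg
    obtain ⟨a, _, ha⟩ := Polynomial.isUnit_iff.mp hunit
    have hc : (d p).coeff 1 = v p 1 := by
      simp [hd, Polynomial.coeff_add, Polynomial.coeff_C, Polynomial.coeff_X_mul]
    rw [← ha] at hc
    simpa [Polynomial.coeff_C] using hc.symm
  -- contradiction at (i,j,k) = (0,1,0)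
  have h010 := h 0 1 0
  rw [Finset.sum_eq_zero (fun p _ => by rw [hv1 p]; ring)] at h010
  simp [e] at h010

/-- T = e₁⊗e₁⊗e₃ + e₁⊗(e₂+e₃)⊗e₁ + e₂⊗e₁⊗e₂ + e₃⊗e₁⊗e₁ has rank 4. -/
theorem stmt_6 {K : Type} [Field K]
    (T : Fin 3 → Fin 3 → Fin 3 → K)
    (hT : ∀ i j k, T i j k =
      e K 0 i * e K 0 j * e K 2 k
      + e K 0 i * (e K 1 j + e K 2 j) * e K 0 k
      + e K 1 i * e K 0 j * e K 1 k
      + e K 2 i * e K 0 j * e K 0 k) :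
    tensorRank T = 4 := by
  classical
  set S := {r | ∃ (u : Fin r → Fin 3 → K) (v : Fin r → Fin 3 → K) (w : Fin r → Fin 3 → K),
    ∀ i j k, T i j k = ∑ p, u p i * v p j * w p k} with hS
  have h4 : 4 ∈ S := by
    refine ⟨![e K 0, e K 0, e K 1, e K 2],
      ![e K 0, fun j => e K 1 j + e K 2 j, e K 0, e K 0],
      ![e K 2, e K 0, e K 1, e K 0], fun i j k => ?_⟩
    rw [hT i j k, Fin.sum_univ_four]
    simp [Matrix.vecHead, Matrix.vecTail]
  have hle : sInf S ≤ 4 := Nat.sInf_le h4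
  have hmem : sInf S ∈ S := Nat.sInf_mem ⟨4, h4⟩
  have key : ∀ r, r ∈ S → r ≤ 3 → False := by
    intro r hr hr3
    have h3 : 3 ∈ S := mem_mono T hr3 hr
    obtain ⟨u, v, w, h⟩ := h3
    exact no_rank_three u v w fun i j k => (h i j k).symm.trans (hT i j k)
  have hge : ¬ sInf S ≤ 3 := fun hc => key _ hmem hc
  show sInf S = 4
  omega
end

section
/- The tensor (e₁+e₃)⊗e₁⊗e₁ + e₁⊗e₂⊗e₂ + e₁⊗e₃⊗e₁ + e₂⊗e₁⊗e₃ in K³⊗K³⊗K³ has tensor rank exactly 4. -/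
open Matrix in
lemma no_rank3 {K : Type} [Field K] (u v w : Fin 3 → Fin 3 → K)
    (h : ∀ i j k : Fin 3,
      ((e K 0 i + e K 2 i) * e K 0 j * e K 0 k
      + e K 0 i * e K 1 j * e K 1 k
      + e K 0 i * e K 2 j * e K 0 k
      + e K 1 i * e K 0 j * e K 2 k) = ∑ p, u p i * v p j * w p k) : False := by
  set M : Fin 3 → Fin 3 → Fin 3 → K := fun i j k =>
      ((e K 0 i + e K 2 i) * e K 0 j * e K 0 k
      + e K 0 i * e K 1 j * e K 1 k
      + e K 0 i * e K 2 j * e K 0 k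
      + e K 1 i * e K 0 j * e K 2 k) with hM
  set A : Fin 3 → Fin 3 → Fin 3 → K := fun p j k => v p j * w p k with hA
  set U : Matrix (Fin 3) (Fin 3) K := Matrix.of (fun i p => u p i) with hU
  have hMA : ∀ i j k, M i j k = ∑ p, U i p * A p j k := by
    intro i j k
    rw [hM]
    simp only [h i j k]
    exact Finset.sum_congr rfl (fun p _ => by simp [hU, hA]; ring)
  -- U is invertible
  have hUnit : IsUnit U := by
    rw [← Matrix.vecMul_injective_iff_isUnit]
    intro x y hxy
    have key : ∀ z : Fin 3 → K, z ᵥ* U = 0 → z = 0 := by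
      intro z hz
      have hs : ∀ j k, ∑ i, z i * M i j k = 0 := by
        intro j k
        calc ∑ i, z i * M i j k = ∑ i, z i * ∑ p, U i p * A p j k := by
              simp_rw [hMA]
          _ = ∑ p, (∑ i, z i * U i p) * A p j k := by
              simp_rw [Finset.mul_sum, Finset.sum_mul]
              rw [Finset.sum_comm]
              exact Finset.sum_congr rfl fun _ _ => Finset.sum_congr rfl fun _ _ => by ring
          _ = 0 := by
              have : ∀ p, ∑ i, z i * U i p = 0 := fun p => congrFun hz p
              simp [this]
      have h1 : z 1 = 0 := by
        have := hs 0 2; simp [hM, e, Fin.sum_univ_three] at this; simpa using this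
      have h0 : z 0 = 0 := by
        have := hs 1 1; simp [hM, e, Fin.sum_univ_three] at this; simpa using this
      have h2 : z 2 = 0 := by
        have := hs 0 0; simp [hM, e, Fin.sum_univ_three, h0] at this; simpa using this
      funext i; fin_cases i <;> simp [h0, h1, h2]
    have : (x - y) ᵥ* U = 0 := by
      simp only at hxy
      rw [Matrix.sub_vecMul, hxy, sub_self]
    have := key _ this
    exact sub_eq_zero.mp this
  have hdet : IsUnit U.det := (Matrix.isUnit_iff_isUnit_det U).mp hUnit
  -- A p j k = ∑ i, U⁻¹ p i * M i j k
  have hAM : ∀ p j k, A p j k = ∑ i, U⁻¹ p i * M i j k := by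
    intro p j k
    have h1 : U *ᵥ (fun q => A q j k) = fun i => M i j k := by
      funext i; simp [Matrix.mulVec, dotProduct, hMA]
    have h2 : U⁻¹ *ᵥ (U *ᵥ (fun q => A q j k)) = (fun q => A q j k) := by
      rw [Matrix.mulVec_mulVec, Matrix.nonsing_inv_mul U hdet, Matrix.one_mulVec]
    rw [h1] at h2
    have := congrFun h2 p
    simp [Matrix.mulVec, dotProduct] at this
    exact this.symm
  -- compute entries
  have e10 : ∀ p, A p 1 0 = 0 := by
    intro p; rw [hAM]; simp [hM, e, Fin.sum_univ_three]
  have e21 : ∀ p, A p 2 1 = 0 := by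
    intro p; rw [hAM]; simp [hM, e, Fin.sum_univ_three]
  have e11 : ∀ p, A p 1 1 = U⁻¹ p 0 := by
    intro p; rw [hAM]; simp [hM, e, Fin.sum_univ_three]
  have e20 : ∀ p, A p 2 0 = U⁻¹ p 0 := by
    intro p; rw [hAM]; simp [hM, e, Fin.sum_univ_three]
  have hminor : ∀ p : Fin 3, A p 1 0 * A p 2 1 = A p 1 1 * A p 2 0 := by
    intro p; simp [hA]; ring
  have hz : ∀ p, U⁻¹ p 0 = 0 := by
    intro p
    have h' : U⁻¹ p 0 * U⁻¹ p 0 = 0 := by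
      have h2 := (hminor p).symm
      rw [e11, e20, e10, zero_mul] at h2
      exact h2
    exact mul_self_eq_zero.mp h'
  have h011 : M 0 1 1 = 1 := by simp [hM, e]
  have : M 0 1 1 = 0 := by
    rw [hMA]
    have : ∀ p, A p 1 1 = 0 := fun p => by rw [e11, hz]
    simp [this]
  rw [h011] at this
  exact one_ne_zero this

/-- (e₁+e₃)⊗e₁⊗e₁ + e₁⊗e₂⊗e₂ + e₁⊗e₃⊗e₁ + e₂⊗e₁⊗e₃ has rank 4. -/
theorem stmt_9 {K : Type} [Field K]
    (T : Fin 3 → Fin 3 → Fin 3 → K)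
    (hT : ∀ i j k, T i j k =
      (e K 0 i + e K 2 i) * e K 0 j * e K 0 k
      + e K 0 i * e K 1 j * e K 1 k
      + e K 0 i * e K 2 j * e K 0 k
      + e K 1 i * e K 0 j * e K 2 k) :
    tensorRank T = 4 := by
  have hmem : 4 ∈ {r | ∃ (u : Fin r → Fin 3 → K) (v : Fin r → Fin 3 → K)
      (w : Fin r → Fin 3 → K), ∀ i j k, T i j k = ∑ p, u p i * v p j * w p k} := by
    refine ⟨![fun i => e K 0 i + e K 2 i, e K 0, e K 0, e K 1],
            ![e K 0, e K 1, e K 2, e K 0],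
            ![e K 0, e K 1, e K 0, e K 2], ?_⟩
    intro i j k
    rw [hT, Fin.sum_univ_four]
    simp only [Matrix.cons_val_zero, Matrix.cons_val_one, Matrix.head_cons,
      Matrix.cons_val_two, Matrix.tail_cons, Matrix.cons_val_three]
  refine le_antisymm (Nat.sInf_le hmem) (le_csInf ⟨4, hmem⟩ fun r hr => ?_)
  by_contra hlt
  push_neg at hlt
  have hr3 : r ≤ 3 := by omega
  obtain ⟨u, v, w, hd⟩ := hr
  have hpad : ∀ (f : Fin r → K),
      (∑ p : Fin 3, if h : (p : ℕ) < r then f ⟨p, h⟩ else 0) = ∑ q, f q := by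
    intro f
    have h1 : (∑ p : Fin 3, if h : (p : ℕ) < r then f ⟨p, h⟩ else 0)
        = ∑ n ∈ Finset.range 3, (if h : n < r then f ⟨n, h⟩ else 0) :=
      Fin.sum_univ_eq_sum_range (fun n => if h : n < r then f ⟨n, h⟩ else 0) 3
    have h2 : (∑ n ∈ Finset.range r, (if h : n < r then f ⟨n, h⟩ else 0))
        = ∑ n ∈ Finset.range 3, (if h : n < r then f ⟨n, h⟩ else 0) :=
      Finset.sum_subset (Finset.range_subset_range.mpr hr3)
        (fun x _ hx => dif_neg (by simpa using hx))
    have h3 : (∑ n ∈ Finset.range r, (if h : n < r then f ⟨n, h⟩ else 0))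
        = ∑ q, f q := by
      rw [← Fin.sum_univ_eq_sum_range (fun n => if h : n < r then f ⟨n, h⟩ else 0) r]
      exact Finset.sum_congr rfl fun p _ => by rw [dif_pos p.isLt]
    rw [h1, ← h2, h3]
  apply no_rank3 (fun p i => if h : (p : ℕ) < r then u ⟨p, h⟩ i else 0)
    (fun p j => if h : (p : ℕ) < r then v ⟨p, h⟩ j else 0)
    (fun p k => if h : (p : ℕ) < r then w ⟨p, h⟩ k else 0)
  intro i j k
  rw [← hT, hd i j k, ← hpad (fun q => u q i * v q j * w q k)]
  exact Finset.sum_congr rfl fun p _ => by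
    by_cases h : (p : ℕ) < r <;> simp [h]
end

section
/- Let L₁, L₂, L₃ be subspaces of a (k+1)-dimensional vector space V satisfying (Lᵣ ∩ Lₛ) + Lₜ = V for all permutations {r,s,t} of {1,2,3}. Set i = dim(L₁∩L₂∩L₃) and jᵣₛ = dim(Lᵣ∩Lₛ) − i. Then there exists a basis of V consisting of vectors v₁,…,v_i, w₁,…,w_{j₁₂}, u₁,…,u_{j₁₃}, s₁,…,s_{j₂₃} such that the v's span L₁∩L₂∩L₃, the v's and w's span L₁∩L₂, the v's and u's span L₁∩L₃, the v's and s's span L₂∩L₃, and moreover L₁ = span(v,w,u), L₂ = span(v,w,s), L₃ = span(v,u,s). -/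
open Module Set

private lemma aux_compl {K V : Type} [Field K] [AddCommGroup V] [Module K V]
    [FiniteDimensional K V] (I p : Submodule K V) (h : I ≤ p) :
    ∃ W : Submodule K V, I ⊔ W = p ∧
      Module.finrank K I + Module.finrank K W = Module.finrank K p := by
  obtain ⟨Wc, hc⟩ := Submodule.exists_isCompl (Submodule.comap p.subtype I)
  have h1 : Submodule.map p.subtype (Submodule.comap p.subtype I) = I := by
    rw [Submodule.map_comap_subtype, inf_eq_right.2 h]
  refine ⟨Submodule.map p.subtype Wc, ?_, ?_⟩
  · rw [← h1, ← Submodule.map_sup, hc.sup_eq_top, Submodule.map_subtype_top]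
  · have hsup : I ⊔ Submodule.map p.subtype Wc = p := by
      rw [← h1, ← Submodule.map_sup, hc.sup_eq_top, Submodule.map_subtype_top]
    have hinf : I ⊓ Submodule.map p.subtype Wc = ⊥ := by
      rw [← h1, ← Submodule.map_inf _ p.injective_subtype, hc.inf_eq_bot,
        Submodule.map_bot]
    have := Submodule.finrank_sup_add_finrank_inf_eq I (Submodule.map p.subtype Wc)
    rw [hsup, hinf, finrank_bot, add_zero] at this
    omega

private lemma aux_span {K V : Type} [Field K] [AddCommGroup V] [Module K V]
    (p : Submodule K V) {ι : Type} (b : Basis ι K ↥p) :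
    Submodule.span K (Set.range fun j => (b j : V)) = p := by
  have : (fun j => (b j : V)) = p.subtype ∘ b := rfl
  rw [this, Set.range_comp, Submodule.span_image, b.span_eq, Submodule.map_subtype_top]

/-- under the generality assumption (Lᵣ ∩ Lₛ) + Lₜ = V, there is a basis
of V adapted to all the intersections: vectors v (spanning L₁∩L₂∩L₃), w, u, s with
v∪w spanning L₁∩L₂, v∪u spanning L₁∩L₃, v∪s spanning L₂∩L₃, and
L₁ = span(v,w,u), L₂ = span(v,w,s), L₃ = span(v,u,s). -/
theorem stmt_12 {K V : Type} [Field K] [AddCommGroup V] [Module K V]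
    [FiniteDimensional K V] (k : ℕ) (hV : Module.finrank K V = k + 1)
    (L₁ L₂ L₃ : Submodule K V)
    (hgen₁ : (L₁ ⊓ L₂) ⊔ L₃ = ⊤)
    (hgen₂ : (L₁ ⊓ L₃) ⊔ L₂ = ⊤)
    (hgen₃ : (L₂ ⊓ L₃) ⊔ L₁ = ⊤) :
    ∃ (v : Fin (Module.finrank K ↥(L₁ ⊓ L₂ ⊓ L₃)) → V)
      (w : Fin (Module.finrank K ↥(L₁ ⊓ L₂) - Module.finrank K ↥(L₁ ⊓ L₂ ⊓ L₃)) → V)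
      (u : Fin (Module.finrank K ↥(L₁ ⊓ L₃) - Module.finrank K ↥(L₁ ⊓ L₂ ⊓ L₃)) → V)
      (s : Fin (Module.finrank K ↥(L₂ ⊓ L₃) - Module.finrank K ↥(L₁ ⊓ L₂ ⊓ L₃)) → V),
      LinearIndependent K (Sum.elim v (Sum.elim w (Sum.elim u s))) ∧
      Submodule.span K (Set.range (Sum.elim v (Sum.elim w (Sum.elim u s)))) = ⊤ ∧
      Submodule.span K (Set.range v) = L₁ ⊓ L₂ ⊓ L₃ ∧
      Submodule.span K (Set.range v ∪ Set.range w) = L₁ ⊓ L₂ ∧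
      Submodule.span K (Set.range v ∪ Set.range u) = L₁ ⊓ L₃ ∧
      Submodule.span K (Set.range v ∪ Set.range s) = L₂ ⊓ L₃ ∧
      Submodule.span K (Set.range v ∪ Set.range w ∪ Set.range u) = L₁ ∧
      Submodule.span K (Set.range v ∪ Set.range w ∪ Set.range s) = L₂ ∧
      Submodule.span K (Set.range v ∪ Set.range u ∪ Set.range s) = L₃ := by
  set I : Submodule K V := L₁ ⊓ L₂ ⊓ L₃ with hI
  -- the triple intersection sits inside each pairwise intersection
  have hI12 : I ≤ L₁ ⊓ L₂ := inf_le_left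
  have hI13 : I ≤ L₁ ⊓ L₃ := le_inf (inf_le_left.trans inf_le_left) inf_le_right
  have hI23 : I ≤ L₂ ⊓ L₃ := le_inf (inf_le_left.trans inf_le_right) inf_le_right
  obtain ⟨W, hWsup, hWdim⟩ := aux_compl I (L₁ ⊓ L₂) hI12
  obtain ⟨U, hUsup, hUdim⟩ := aux_compl I (L₁ ⊓ L₃) hI13
  obtain ⟨S, hSsup, hSdim⟩ := aux_compl I (L₂ ⊓ L₃) hI23
  -- key lattice identities
  have hL1 : (L₁ ⊓ L₂) ⊔ (L₁ ⊓ L₃) = L₁ := by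
    have := sup_inf_assoc_of_le L₃ (inf_le_left : L₁ ⊓ L₂ ≤ L₁)
    rw [hgen₁, top_inf_eq, inf_comm L₃ L₁] at this
    exact this.symm
  have hL2 : (L₁ ⊓ L₂) ⊔ (L₂ ⊓ L₃) = L₂ := by
    have := sup_inf_assoc_of_le L₃ (inf_le_right : L₁ ⊓ L₂ ≤ L₂)
    rw [hgen₁, top_inf_eq, inf_comm L₃ L₂] at this
    exact this.symm
  have hL3 : (L₁ ⊓ L₃) ⊔ (L₂ ⊓ L₃) = L₃ := by
    have := sup_inf_assoc_of_le L₂ (inf_le_right : L₁ ⊓ L₃ ≤ L₃)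
    rw [hgen₂, top_inf_eq] at this
    exact this.symm
  have hinf1213 : (L₁ ⊓ L₂) ⊓ (L₁ ⊓ L₃) = I := by
    rw [hI]; ext x; simp only [Submodule.mem_inf]; tauto
  have hinfL123 : L₁ ⊓ (L₂ ⊓ L₃) = I := by
    rw [hI]; ext x; simp only [Submodule.mem_inf]; tauto
  -- dimension bookkeeping
  have hd1 := Submodule.finrank_sup_add_finrank_inf_eq (L₁ ⊓ L₂) (L₁ ⊓ L₃)
  rw [hL1, hinf1213] at hd1
  have hd2 := Submodule.finrank_sup_add_finrank_inf_eq L₁ (L₂ ⊓ L₃)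
  rw [hinfL123, sup_comm, hgen₃, finrank_top] at hd2
  -- dimensions of the complements
  have hWdim' : Module.finrank K ↥(L₁ ⊓ L₂) - Module.finrank K ↥I = Module.finrank K W := by
    omega
  have hUdim' : Module.finrank K ↥(L₁ ⊓ L₃) - Module.finrank K ↥I = Module.finrank K U := by
    omega
  have hSdim' : Module.finrank K ↥(L₂ ⊓ L₃) - Module.finrank K ↥I = Module.finrank K S := by
    omega
  -- the vectors
  set bI := finBasis K ↥I
  set bW := finBasis K ↥W
  set bU := finBasis K ↥U
  set bS := finBasis K ↥S
  refine ⟨fun j => (bI j : V), fun j => (bW (Fin.cast hWdim' j) : V),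
    fun j => (bU (Fin.cast hUdim' j) : V), fun j => (bS (Fin.cast hSdim' j) : V),
    ?_⟩
  have hrv : Submodule.span K (Set.range fun j => (bI j : V)) = I := aux_span I bI
  have hrw : Submodule.span K (Set.range fun j => (bW (Fin.cast hWdim' j) : V)) = W := by
    rw [show (fun j => (bW (Fin.cast hWdim' j) : V)) = (fun j => (bW j : V)) ∘ Fin.cast hWdim'
      from rfl, show ((fun j => (bW j : V)) ∘ Fin.cast hWdim') = ((fun j => (bW j : V)) ∘ (finCongr hWdim')) from rfl, (finCongr hWdim').surjective.range_comp]
    exact aux_span W bW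
  have hru : Submodule.span K (Set.range fun j => (bU (Fin.cast hUdim' j) : V)) = U := by
    rw [show (fun j => (bU (Fin.cast hUdim' j) : V)) = (fun j => (bU j : V)) ∘ Fin.cast hUdim'
      from rfl, show ((fun j => (bU j : V)) ∘ Fin.cast hUdim') = ((fun j => (bU j : V)) ∘ (finCongr hUdim')) from rfl, (finCongr hUdim').surjective.range_comp]
    exact aux_span U bU
  have hrs : Submodule.span K (Set.range fun j => (bS (Fin.cast hSdim' j) : V)) = S := by
    rw [show (fun j => (bS (Fin.cast hSdim' j) : V)) = (fun j => (bS j : V)) ∘ Fin.cast hSdim'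
      from rfl, show ((fun j => (bS j : V)) ∘ Fin.cast hSdim') = ((fun j => (bS j : V)) ∘ (finCongr hSdim')) from rfl, (finCongr hSdim').surjective.range_comp]
    exact aux_span S bS
  -- span facts
  have sp_vw : Submodule.span K
      ((Set.range fun j => (bI j : V)) ∪ (Set.range fun j => (bW (Fin.cast hWdim' j) : V)))
      = L₁ ⊓ L₂ := by
    rw [Submodule.span_union, hrv, hrw, hWsup]
  have sp_vu : Submodule.span K
      ((Set.range fun j => (bI j : V)) ∪ (Set.range fun j => (bU (Fin.cast hUdim' j) : V)))
      = L₁ ⊓ L₃ := by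
    rw [Submodule.span_union, hrv, hru, hUsup]
  have sp_vs : Submodule.span K
      ((Set.range fun j => (bI j : V)) ∪ (Set.range fun j => (bS (Fin.cast hSdim' j) : V)))
      = L₂ ⊓ L₃ := by
    rw [Submodule.span_union, hrv, hrs, hSsup]
  have sup_absorb : ∀ X : Submodule K V, I ≤ X → X ⊔ U = X ⊔ (L₁ ⊓ L₃) → True := fun _ _ _ => trivial
  have key : ∀ X : Submodule K V, I ≤ X → ∀ P T : Submodule K V, I ⊔ T = P → X ⊔ T = X ⊔ P := by
    intro X hX P T hT
    rw [← hT, ← sup_assoc, sup_eq_left.2 hX]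
  have sp_vwu : Submodule.span K
      ((Set.range fun j => (bI j : V)) ∪ (Set.range fun j => (bW (Fin.cast hWdim' j) : V))
        ∪ (Set.range fun j => (bU (Fin.cast hUdim' j) : V))) = L₁ := by
    rw [Submodule.span_union, sp_vw, hru, key (L₁ ⊓ L₂) hI12 (L₁ ⊓ L₃) U hUsup, hL1]
  have sp_vws : Submodule.span K
      ((Set.range fun j => (bI j : V)) ∪ (Set.range fun j => (bW (Fin.cast hWdim' j) : V))
        ∪ (Set.range fun j => (bS (Fin.cast hSdim' j) : V))) = L₂ := by
    rw [Submodule.span_union, sp_vw, hrs, key (L₁ ⊓ L₂) hI12 (L₂ ⊓ L₃) S hSsup, hL2]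
  have sp_vus : Submodule.span K
      ((Set.range fun j => (bI j : V)) ∪ (Set.range fun j => (bU (Fin.cast hUdim' j) : V))
        ∪ (Set.range fun j => (bS (Fin.cast hSdim' j) : V))) = L₃ := by
    rw [Submodule.span_union, sp_vu, hrs, key (L₁ ⊓ L₃) hI13 (L₂ ⊓ L₃) S hSsup, hL3]
  -- top span
  have sp_top : Submodule.span K (Set.range (Sum.elim (fun j => (bI j : V))
      (Sum.elim (fun j => (bW (Fin.cast hWdim' j) : V))
        (Sum.elim (fun j => (bU (Fin.cast hUdim' j) : V))
          (fun j => (bS (Fin.cast hSdim' j) : V)))))) = ⊤ := by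
    rw [Sum.elim_range, Sum.elim_range, Sum.elim_range, Submodule.span_union,
      Submodule.span_union, Submodule.span_union, hrv, hrw, hru, hrs]
    apply le_antisymm le_top
    rw [← hgen₃]
    apply sup_le
    · rw [← hSsup]
      exact sup_le le_sup_left (le_sup_of_le_right (le_sup_of_le_right le_sup_right))
    · rw [← hL1, ← hWsup, ← hUsup]
      apply sup_le
      · exact sup_le le_sup_left (le_sup_of_le_right le_sup_left)
      · exact sup_le le_sup_left (le_sup_of_le_right (le_sup_of_le_right le_sup_left))
  -- linear independence via cardinality
  have hcard : Fintype.card (Fin (Module.finrank K ↥I) ⊕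
      (Fin (Module.finrank K ↥(L₁ ⊓ L₂) - Module.finrank K ↥I) ⊕
        (Fin (Module.finrank K ↥(L₁ ⊓ L₃) - Module.finrank K ↥I) ⊕
          Fin (Module.finrank K ↥(L₂ ⊓ L₃) - Module.finrank K ↥I))))
      = Module.finrank K V := by
    simp only [Fintype.card_sum, Fintype.card_fin]
    omega
  refine ⟨linearIndependent_of_top_le_span_of_card_eq_finrank sp_top.ge hcard,
    sp_top, hrv, sp_vw, sp_vu, sp_vs, sp_vwu, sp_vws, sp_vus⟩
end

section
/- Over ℂ, the set of 3×3×3 tensors of rank at most 4 is not closed: there is a continuous family T(t) of tensors, each of rank ≤ 4 for t ≠ 0, whose limit T(0) has rank 5. Consequently tensor rank is not upper semicontinuous (it can jump up in the limit); moreover there is another family of tensors of rank 4 for t ≠ 0 whose limit has rank 2, so rank can also drop in the limit. -/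
set_option maxHeartbeats 1000000

namespace Stmt19

/-- `T` admits a decomposition as a sum of `r` decomposable tensors. -/
def Dec (T : Fin 3 → Fin 3 → Fin 3 → ℂ) (r : ℕ) : Prop :=
  ∃ (u : Fin r → Fin 3 → ℂ) (v : Fin r → Fin 3 → ℂ) (w : Fin r → Fin 3 → ℂ),
    ∀ i j k, T i j k = ∑ p, u p i * v p j * w p k

lemma tensorRank_def (T : Fin 3 → Fin 3 → Fin 3 → ℂ) :
    tensorRank T = sInf {r | Dec T r} := rfl

lemma dec_mono {T : Fin 3 → Fin 3 → Fin 3 → ℂ} {r r' : ℕ} (h : Dec T r) (hle : r ≤ r') :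
    Dec T r' := by
  obtain ⟨u, v, w, hu⟩ := h
  refine ⟨fun p i => if hp : (p : ℕ) < r then u ⟨p, hp⟩ i else 0,
    fun p j => if hp : (p : ℕ) < r then v ⟨p, hp⟩ j else 0,
    fun p k => if hp : (p : ℕ) < r then w ⟨p, hp⟩ k else 0, ?_⟩
  intro i j k
  rw [hu i j k]
  set F : ℕ → ℂ := fun n =>
    if hn : n < r then u ⟨n, hn⟩ i * v ⟨n, hn⟩ j * w ⟨n, hn⟩ k else 0 with hF
  have e1 : ∑ p : Fin r, u p i * v p j * w p k = ∑ n ∈ Finset.range r, F n := by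
    rw [← Fin.sum_univ_eq_sum_range F r]
    apply Finset.sum_congr rfl
    intro p _
    simp only [hF]
    rw [dif_pos p.isLt]
  have e2 : ∑ n ∈ Finset.range r, F n = ∑ n ∈ Finset.range r', F n := by
    apply Finset.sum_subset (Finset.range_subset_range.mpr hle)
    intro x _ hx
    simp only [Finset.mem_range, not_lt] at hx
    simp only [hF]
    rw [dif_neg (by omega)]
  have e3 : ∑ n ∈ Finset.range r', F n
      = ∑ p : Fin r', (if hp : (p : ℕ) < r then u ⟨p, hp⟩ i else 0) *
          (if hp : (p : ℕ) < r then v ⟨p, hp⟩ j else 0) *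
          (if hp : (p : ℕ) < r then w ⟨p, hp⟩ k else 0) := by
    rw [← Fin.sum_univ_eq_sum_range F r']
    apply Finset.sum_congr rfl
    intro p _
    by_cases hp : (p : ℕ) < r <;> simp [hF, hp]
  rw [e1, e2, e3]

lemma rank_le {T : Fin 3 → Fin 3 → Fin 3 → ℂ} {r : ℕ} (h : Dec T r) : tensorRank T ≤ r := by
  rw [tensorRank_def]
  exact Nat.sInf_le h

lemma rank_eq {T : Fin 3 → Fin 3 → Fin 3 → ℂ} {r : ℕ} (h : Dec T r) (hn : ¬ Dec T (r - 1)) :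
    tensorRank T = r := by
  rw [tensorRank_def]
  refine le_antisymm (Nat.sInf_le h) (le_csInf ⟨r, h⟩ ?_)
  intro m hm
  by_contra hlt
  push_neg at hlt
  exact hn (dec_mono hm (by omega))


lemma fk3_0 (h : 0 < 3) : (⟨0, h⟩ : Fin 3) = 0 := rfl
lemma fk3_1 (h : 1 < 3) : (⟨1, h⟩ : Fin 3) = 1 := rfl
lemma fk3_2 (h : 2 < 3) : (⟨2, h⟩ : Fin 3) = 2 := rfl
lemma fk4_0 (h : 0 < 4) : (⟨0, h⟩ : Fin 4) = 0 := rfl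
lemma fk4_1 (h : 1 < 4) : (⟨1, h⟩ : Fin 4) = 1 := rfl
lemma fk4_2 (h : 2 < 4) : (⟨2, h⟩ : Fin 4) = 2 := rfl
lemma fk4_3 (h : 3 < 4) : (⟨3, h⟩ : Fin 4) = 3 := rfl

/-- An explicit 3×3 determinant. -/
def det3 (m : Fin 3 → Fin 3 → ℂ) : ℂ :=
  m 0 0 * (m 1 1 * m 2 2 - m 1 2 * m 2 1) - m 0 1 * (m 1 0 * m 2 2 - m 1 2 * m 2 0)
    + m 0 2 * (m 1 0 * m 2 1 - m 1 1 * m 2 0)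

/-- The determinant of a sum of two rank-one matrices vanishes. -/
lemma two_term_det (L : Fin 3 → Fin 3 → ℂ) (x1 w1 x2 w2 : Fin 3 → ℂ)
    (hL : ∀ j k, L j k = x1 j * w1 k + x2 j * w2 k) : det3 L = 0 := by
  have hfun : L = fun j k => x1 j * w1 k + x2 j * w2 k :=
    funext fun j => funext fun k => hL j k
  rw [hfun]
  simp only [det3]
  ring

/-- Core determinant identity: if two slices `A`, `B` are simultaneously decomposed by three
rank-one matrices, then for each `p` the matrix `a p • B - b p • A` is a sum of two rank-one
matrices, hence has vanishing determinant. -/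
lemma core3 (a b : Fin 3 → ℂ) (v w : Fin 3 → Fin 3 → ℂ) (A B : Fin 3 → Fin 3 → ℂ)
    (hA : ∀ j k, (∑ q : Fin 3, a q * v q j * w q k) = A j k)
    (hB : ∀ j k, (∑ q : Fin 3, b q * v q j * w q k) = B j k)
    (p : Fin 3) : det3 (fun j k => a p * B j k - b p * A j k) = 0 := by
  fin_cases p
  · simp only [fk3_0, fk3_1, fk3_2, fk4_0, fk4_1, fk4_2, fk4_3] at *
    apply two_term_det _ (fun j => (a 0 * b 1 - b 0 * a 1) * v 1 j) (w 1)
      (fun j => (a 0 * b 2 - b 0 * a 2) * v 2 j) (w 2)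
    intro j k
    rw [← hA j k, ← hB j k]
    simp only [Fin.sum_univ_three]
    ring
  · simp only [fk3_0, fk3_1, fk3_2, fk4_0, fk4_1, fk4_2, fk4_3] at *
    apply two_term_det _ (fun j => (a 1 * b 0 - b 1 * a 0) * v 0 j) (w 0)
      (fun j => (a 1 * b 2 - b 1 * a 2) * v 2 j) (w 2)
    intro j k
    rw [← hA j k, ← hB j k]
    simp only [Fin.sum_univ_three]
    ring
  · simp only [fk3_0, fk3_1, fk3_2, fk4_0, fk4_1, fk4_2, fk4_3] at *
    apply two_term_det _ (fun j => (a 2 * b 0 - b 2 * a 0) * v 0 j) (w 0)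
      (fun j => (a 2 * b 1 - b 2 * a 1) * v 1 j) (w 1)
    intro j k
    rw [← hA j k, ← hB j k]
    simp only [Fin.sum_univ_three]
    ring

/-- Same with four rank-one matrices, of which one (index `p₀`) has vanishing coefficients. -/
lemma core4 (a b : Fin 4 → ℂ) (v w : Fin 4 → Fin 3 → ℂ) (A B : Fin 3 → Fin 3 → ℂ)
    (hA : ∀ j k, (∑ q : Fin 4, a q * v q j * w q k) = A j k)
    (hB : ∀ j k, (∑ q : Fin 4, b q * v q j * w q k) = B j k)
    (p₀ p : Fin 4) (ha0 : a p₀ = 0) (hb0 : b p₀ = 0) :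
    det3 (fun j k => a p * B j k - b p * A j k) = 0 := by
  fin_cases p₀ <;> fin_cases p
  · simp only [fk3_0, fk3_1, fk3_2, fk4_0, fk4_1, fk4_2, fk4_3] at *
    apply two_term_det _ (fun j => (a 0 * b 1 - b 0 * a 1) * v 1 j) (w 1)
      (fun j => (a 0 * b 2 - b 0 * a 2) * v 2 j) (w 2)
    intro j k
    rw [← hA j k, ← hB j k]
    simp only [Fin.sum_univ_four, ha0, hb0]
    ring
  · simp only [fk3_0, fk3_1, fk3_2, fk4_0, fk4_1, fk4_2, fk4_3] at *
    apply two_term_det _ (fun j => (a 1 * b 2 - b 1 * a 2) * v 2 j) (w 2)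
      (fun j => (a 1 * b 3 - b 1 * a 3) * v 3 j) (w 3)
    intro j k
    rw [← hA j k, ← hB j k]
    simp only [Fin.sum_univ_four, ha0, hb0]
    ring
  · simp only [fk3_0, fk3_1, fk3_2, fk4_0, fk4_1, fk4_2, fk4_3] at *
    apply two_term_det _ (fun j => (a 2 * b 1 - b 2 * a 1) * v 1 j) (w 1)
      (fun j => (a 2 * b 3 - b 2 * a 3) * v 3 j) (w 3)
    intro j k
    rw [← hA j k, ← hB j k]
    simp only [Fin.sum_univ_four, ha0, hb0]
    ring
  · simp only [fk3_0, fk3_1, fk3_2, fk4_0, fk4_1, fk4_2, fk4_3] at *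
    apply two_term_det _ (fun j => (a 3 * b 1 - b 3 * a 1) * v 1 j) (w 1)
      (fun j => (a 3 * b 2 - b 3 * a 2) * v 2 j) (w 2)
    intro j k
    rw [← hA j k, ← hB j k]
    simp only [Fin.sum_univ_four, ha0, hb0]
    ring
  · simp only [fk3_0, fk3_1, fk3_2, fk4_0, fk4_1, fk4_2, fk4_3] at *
    apply two_term_det _ (fun j => (a 0 * b 2 - b 0 * a 2) * v 2 j) (w 2)
      (fun j => (a 0 * b 3 - b 0 * a 3) * v 3 j) (w 3)
    intro j k
    rw [← hA j k, ← hB j k]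
    simp only [Fin.sum_univ_four, ha0, hb0]
    ring
  · simp only [fk3_0, fk3_1, fk3_2, fk4_0, fk4_1, fk4_2, fk4_3] at *
    apply two_term_det _ (fun j => (a 1 * b 0 - b 1 * a 0) * v 0 j) (w 0)
      (fun j => (a 1 * b 2 - b 1 * a 2) * v 2 j) (w 2)
    intro j k
    rw [← hA j k, ← hB j k]
    simp only [Fin.sum_univ_four, ha0, hb0]
    ring
  · simp only [fk3_0, fk3_1, fk3_2, fk4_0, fk4_1, fk4_2, fk4_3] at *
    apply two_term_det _ (fun j => (a 2 * b 0 - b 2 * a 0) * v 0 j) (w 0)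
      (fun j => (a 2 * b 3 - b 2 * a 3) * v 3 j) (w 3)
    intro j k
    rw [← hA j k, ← hB j k]
    simp only [Fin.sum_univ_four, ha0, hb0]
    ring
  · simp only [fk3_0, fk3_1, fk3_2, fk4_0, fk4_1, fk4_2, fk4_3] at *
    apply two_term_det _ (fun j => (a 3 * b 0 - b 3 * a 0) * v 0 j) (w 0)
      (fun j => (a 3 * b 2 - b 3 * a 2) * v 2 j) (w 2)
    intro j k
    rw [← hA j k, ← hB j k]
    simp only [Fin.sum_univ_four, ha0, hb0]
    ring
  · simp only [fk3_0, fk3_1, fk3_2, fk4_0, fk4_1, fk4_2, fk4_3] at *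
    apply two_term_det _ (fun j => (a 0 * b 1 - b 0 * a 1) * v 1 j) (w 1)
      (fun j => (a 0 * b 3 - b 0 * a 3) * v 3 j) (w 3)
    intro j k
    rw [← hA j k, ← hB j k]
    simp only [Fin.sum_univ_four, ha0, hb0]
    ring
  · simp only [fk3_0, fk3_1, fk3_2, fk4_0, fk4_1, fk4_2, fk4_3] at *
    apply two_term_det _ (fun j => (a 1 * b 0 - b 1 * a 0) * v 0 j) (w 0)
      (fun j => (a 1 * b 3 - b 1 * a 3) * v 3 j) (w 3)
    intro j k
    rw [← hA j k, ← hB j k]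
    simp only [Fin.sum_univ_four, ha0, hb0]
    ring
  · simp only [fk3_0, fk3_1, fk3_2, fk4_0, fk4_1, fk4_2, fk4_3] at *
    apply two_term_det _ (fun j => (a 2 * b 0 - b 2 * a 0) * v 0 j) (w 0)
      (fun j => (a 2 * b 1 - b 2 * a 1) * v 1 j) (w 1)
    intro j k
    rw [← hA j k, ← hB j k]
    simp only [Fin.sum_univ_four, ha0, hb0]
    ring
  · simp only [fk3_0, fk3_1, fk3_2, fk4_0, fk4_1, fk4_2, fk4_3] at *
    apply two_term_det _ (fun j => (a 3 * b 0 - b 3 * a 0) * v 0 j) (w 0)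
      (fun j => (a 3 * b 1 - b 3 * a 1) * v 1 j) (w 1)
    intro j k
    rw [← hA j k, ← hB j k]
    simp only [Fin.sum_univ_four, ha0, hb0]
    ring
  · simp only [fk3_0, fk3_1, fk3_2, fk4_0, fk4_1, fk4_2, fk4_3] at *
    apply two_term_det _ (fun j => (a 0 * b 1 - b 0 * a 1) * v 1 j) (w 1)
      (fun j => (a 0 * b 2 - b 0 * a 2) * v 2 j) (w 2)
    intro j k
    rw [← hA j k, ← hB j k]
    simp only [Fin.sum_univ_four, ha0, hb0]
    ring
  · simp only [fk3_0, fk3_1, fk3_2, fk4_0, fk4_1, fk4_2, fk4_3] at *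
    apply two_term_det _ (fun j => (a 1 * b 0 - b 1 * a 0) * v 0 j) (w 0)
      (fun j => (a 1 * b 2 - b 1 * a 2) * v 2 j) (w 2)
    intro j k
    rw [← hA j k, ← hB j k]
    simp only [Fin.sum_univ_four, ha0, hb0]
    ring
  · simp only [fk3_0, fk3_1, fk3_2, fk4_0, fk4_1, fk4_2, fk4_3] at *
    apply two_term_det _ (fun j => (a 2 * b 0 - b 2 * a 0) * v 0 j) (w 0)
      (fun j => (a 2 * b 1 - b 2 * a 1) * v 1 j) (w 1)
    intro j k
    rw [← hA j k, ← hB j k]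
    simp only [Fin.sum_univ_four, ha0, hb0]
    ring
  · simp only [fk3_0, fk3_1, fk3_2, fk4_0, fk4_1, fk4_2, fk4_3] at *
    apply two_term_det _ (fun j => (a 3 * b 0 - b 3 * a 0) * v 0 j) (w 0)
      (fun j => (a 3 * b 1 - b 3 * a 1) * v 1 j) (w 1)
    intro j k
    rw [← hA j k, ← hB j k]
    simp only [Fin.sum_univ_four, ha0, hb0]
    ring

/-! ### The two families -/

/-- Family 1: `S1 0` is the multiplication tensor of `ℂ[x]/(x³)`, of rank 5;
for `t ≠ 0` it is an interpolation degeneration of rank ≤ 4. -/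
def S1 : ℂ → (Fin 3 → Fin 3 → Fin 3 → ℂ) := fun t i j k =>
  (if (i : ℕ) + (j : ℕ) = (k : ℕ) then 1 else 0)
    + (if (i : ℕ) = 2 ∧ (j : ℕ) = 2 ∧ (k : ℕ) = 1 then -2 else 0) * t ^ 3
    + (if (i : ℕ) = 2 ∧ (j : ℕ) = 2 ∧ (k : ℕ) = 2 then 1 else 0) * t ^ 2

/-- Family 2: the pencil `(t·I, J)` with `J` a regular nilpotent Jordan block. -/
def S2 : ℂ → (Fin 3 → Fin 3 → Fin 3 → ℂ) := fun t i j k =>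
  (if (i : ℕ) = 0 ∧ (j : ℕ) = (k : ℕ) then 1 else 0) * t
    + (if (i : ℕ) = 1 ∧ (k : ℕ) = (j : ℕ) + 1 then 1 else 0)

lemma contS1 : Continuous S1 := by
  apply continuous_pi; intro i
  apply continuous_pi; intro j
  apply continuous_pi; intro k
  exact ((continuous_const.add (continuous_const.mul (continuous_pow 3))).add
    (continuous_const.mul (continuous_pow 2)))

lemma contS2 : Continuous S2 := by
  apply continuous_pi; intro i
  apply continuous_pi; intro j
  apply continuous_pi; intro k
  exact (continuous_const.mul continuous_id).add continuous_const

lemma v3_0 : ((0 : Fin 3) : ℕ) = 0 := rfl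
lemma v3_1 : ((1 : Fin 3) : ℕ) = 1 := rfl
lemma v3_2 : ((2 : Fin 3) : ℕ) = 2 := rfl
lemma v4_0 : ((0 : Fin 4) : ℕ) = 0 := rfl
lemma v4_1 : ((1 : Fin 4) : ℕ) = 1 := rfl
lemma v4_2 : ((2 : Fin 4) : ℕ) = 2 := rfl
lemma v4_3 : ((3 : Fin 4) : ℕ) = 3 := rfl
lemma v5_0 : ((0 : Fin 5) : ℕ) = 0 := rfl
lemma v5_1 : ((1 : Fin 5) : ℕ) = 1 := rfl
lemma v5_2 : ((2 : Fin 5) : ℕ) = 2 := rfl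
lemma v5_3 : ((3 : Fin 5) : ℕ) = 3 := rfl
lemma v5_4 : ((4 : Fin 5) : ℕ) = 4 := rfl
lemma v2_0 : ((0 : Fin 2) : ℕ) = 0 := rfl
lemma v2_1 : ((1 : Fin 2) : ℕ) = 1 := rfl

/-- Interpolation nodes. -/
noncomputable def cc : Fin 4 → ℂ := fun p =>
  if (p : ℕ) = 0 then (0 : ℂ) else if (p : ℕ) = 1 then (1 : ℂ) else if (p : ℕ) = 2 then (-1 : ℂ) else (2 : ℂ)
/-- First three columns of the inverse Vandermonde matrix at the nodes `cc`. -/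
noncomputable def W4 : Fin 4 → Fin 3 → ℂ := fun p k =>
  if (p : ℕ) = 0 then (if (k : ℕ) = 0 then (1 : ℂ) else if (k : ℕ) = 1 then (-1/2 : ℂ) else (-1 : ℂ))
  else if (p : ℕ) = 1 then (if (k : ℕ) = 0 then (0 : ℂ) else if (k : ℕ) = 1 then (1 : ℂ) else (1/2 : ℂ))
  else if (p : ℕ) = 2 then (if (k : ℕ) = 0 then (0 : ℂ) else if (k : ℕ) = 1 then (-1/3 : ℂ) else (1/2 : ℂ))
  else (if (k : ℕ) = 0 then (0 : ℂ) else if (k : ℕ) = 1 then (-1/6 : ℂ) else (0 : ℂ))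
/-- Interpolation nodes for the rank-5 decomposition. -/
noncomputable def c5 : Fin 5 → ℂ := fun p =>
  if (p : ℕ) = 0 then (0 : ℂ) else if (p : ℕ) = 1 then (1 : ℂ) else if (p : ℕ) = 2 then (-1 : ℂ) else if (p : ℕ) = 3 then (2 : ℂ) else (-2 : ℂ)
/-- First three columns of the inverse Vandermonde matrix at the nodes `c5`. -/
noncomputable def W5 : Fin 5 → Fin 3 → ℂ := fun p k =>
  if (p : ℕ) = 0 then (if (k : ℕ) = 0 then (1 : ℂ) else if (k : ℕ) = 1 then (0 : ℂ) else (-5/4 : ℂ))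
  else if (p : ℕ) = 1 then (if (k : ℕ) = 0 then (0 : ℂ) else if (k : ℕ) = 1 then (2/3 : ℂ) else (2/3 : ℂ))
  else if (p : ℕ) = 2 then (if (k : ℕ) = 0 then (0 : ℂ) else if (k : ℕ) = 1 then (-2/3 : ℂ) else (2/3 : ℂ))
  else if (p : ℕ) = 3 then (if (k : ℕ) = 0 then (0 : ℂ) else if (k : ℕ) = 1 then (-1/12 : ℂ) else (-1/24 : ℂ))
  else (if (k : ℕ) = 0 then (0 : ℂ) else if (k : ℕ) = 1 then (1/12 : ℂ) else (-1/24 : ℂ))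


lemma ccv0 : cc 0 = 0 := rfl
lemma ccv1 : cc 1 = 1 := rfl
lemma ccv2 : cc 2 = -1 := rfl
lemma ccv3 : cc 3 = 2 := rfl
lemma c5v0 : c5 0 = 0 := rfl
lemma c5v1 : c5 1 = 1 := rfl
lemma c5v2 : c5 2 = -1 := rfl
lemma c5v3 : c5 3 = 2 := rfl
lemma c5v4 : c5 4 = -2 := rfl
lemma w4v00 : W4 0 0 = 1 := rfl
lemma w4v01 : W4 0 1 = (-1/2) := rfl
lemma w4v02 : W4 0 2 = -1 := rfl
lemma w4v10 : W4 1 0 = 0 := rfl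
lemma w4v11 : W4 1 1 = 1 := rfl
lemma w4v12 : W4 1 2 = (1/2) := rfl
lemma w4v20 : W4 2 0 = 0 := rfl
lemma w4v21 : W4 2 1 = (-1/3) := rfl
lemma w4v22 : W4 2 2 = (1/2) := rfl
lemma w4v30 : W4 3 0 = 0 := rfl
lemma w4v31 : W4 3 1 = (-1/6) := rfl
lemma w4v32 : W4 3 2 = 0 := rfl
lemma w5v00 : W5 0 0 = 1 := rfl
lemma w5v01 : W5 0 1 = 0 := rfl
lemma w5v02 : W5 0 2 = (-5/4) := rfl
lemma w5v10 : W5 1 0 = 0 := rfl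
lemma w5v11 : W5 1 1 = (2/3) := rfl
lemma w5v12 : W5 1 2 = (2/3) := rfl
lemma w5v20 : W5 2 0 = 0 := rfl
lemma w5v21 : W5 2 1 = (-2/3) := rfl
lemma w5v22 : W5 2 2 = (2/3) := rfl
lemma w5v30 : W5 3 0 = 0 := rfl
lemma w5v31 : W5 3 1 = (-1/12) := rfl
lemma w5v32 : W5 3 2 = (-1/24) := rfl
lemma w5v40 : W5 4 0 = 0 := rfl
lemma w5v41 : W5 4 1 = (1/12) := rfl
lemma w5v42 : W5 4 2 = (-1/24) := rfl

lemma s1v000 (t : ℂ) : S1 t 0 0 0 = 1 := by norm_num [S1]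
lemma s2v000 (t : ℂ) : S2 t 0 0 0 = t := by norm_num [S2]
lemma s1v001 (t : ℂ) : S1 t 0 0 1 = 0 := by norm_num [S1]
lemma s2v001 (t : ℂ) : S2 t 0 0 1 = 0 := by norm_num [S2]
lemma s1v002 (t : ℂ) : S1 t 0 0 2 = 0 := by norm_num [S1]
lemma s2v002 (t : ℂ) : S2 t 0 0 2 = 0 := by norm_num [S2]
lemma s1v010 (t : ℂ) : S1 t 0 1 0 = 0 := by norm_num [S1]
lemma s2v010 (t : ℂ) : S2 t 0 1 0 = 0 := by norm_num [S2]
lemma s1v011 (t : ℂ) : S1 t 0 1 1 = 1 := by norm_num [S1]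
lemma s2v011 (t : ℂ) : S2 t 0 1 1 = t := by norm_num [S2]
lemma s1v012 (t : ℂ) : S1 t 0 1 2 = 0 := by norm_num [S1]
lemma s2v012 (t : ℂ) : S2 t 0 1 2 = 0 := by norm_num [S2]
lemma s1v020 (t : ℂ) : S1 t 0 2 0 = 0 := by norm_num [S1]
lemma s2v020 (t : ℂ) : S2 t 0 2 0 = 0 := by norm_num [S2]
lemma s1v021 (t : ℂ) : S1 t 0 2 1 = 0 := by norm_num [S1]
lemma s2v021 (t : ℂ) : S2 t 0 2 1 = 0 := by norm_num [S2]
lemma s1v022 (t : ℂ) : S1 t 0 2 2 = 1 := by norm_num [S1]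
lemma s2v022 (t : ℂ) : S2 t 0 2 2 = t := by norm_num [S2]
lemma s1v100 (t : ℂ) : S1 t 1 0 0 = 0 := by norm_num [S1]
lemma s2v100 (t : ℂ) : S2 t 1 0 0 = 0 := by norm_num [S2]
lemma s1v101 (t : ℂ) : S1 t 1 0 1 = 1 := by norm_num [S1]
lemma s2v101 (t : ℂ) : S2 t 1 0 1 = 1 := by norm_num [S2]
lemma s1v102 (t : ℂ) : S1 t 1 0 2 = 0 := by norm_num [S1]
lemma s2v102 (t : ℂ) : S2 t 1 0 2 = 0 := by norm_num [S2]
lemma s1v110 (t : ℂ) : S1 t 1 1 0 = 0 := by norm_num [S1]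
lemma s2v110 (t : ℂ) : S2 t 1 1 0 = 0 := by norm_num [S2]
lemma s1v111 (t : ℂ) : S1 t 1 1 1 = 0 := by norm_num [S1]
lemma s2v111 (t : ℂ) : S2 t 1 1 1 = 0 := by norm_num [S2]
lemma s1v112 (t : ℂ) : S1 t 1 1 2 = 1 := by norm_num [S1]
lemma s2v112 (t : ℂ) : S2 t 1 1 2 = 1 := by norm_num [S2]
lemma s1v120 (t : ℂ) : S1 t 1 2 0 = 0 := by norm_num [S1]
lemma s2v120 (t : ℂ) : S2 t 1 2 0 = 0 := by norm_num [S2]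
lemma s1v121 (t : ℂ) : S1 t 1 2 1 = 0 := by norm_num [S1]
lemma s2v121 (t : ℂ) : S2 t 1 2 1 = 0 := by norm_num [S2]
lemma s1v122 (t : ℂ) : S1 t 1 2 2 = 0 := by norm_num [S1]
lemma s2v122 (t : ℂ) : S2 t 1 2 2 = 0 := by norm_num [S2]
lemma s1v200 (t : ℂ) : S1 t 2 0 0 = 0 := by norm_num [S1]
lemma s2v200 (t : ℂ) : S2 t 2 0 0 = 0 := by norm_num [S2]
lemma s1v201 (t : ℂ) : S1 t 2 0 1 = 0 := by norm_num [S1]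
lemma s2v201 (t : ℂ) : S2 t 2 0 1 = 0 := by norm_num [S2]
lemma s1v202 (t : ℂ) : S1 t 2 0 2 = 1 := by norm_num [S1]
lemma s2v202 (t : ℂ) : S2 t 2 0 2 = 0 := by norm_num [S2]
lemma s1v210 (t : ℂ) : S1 t 2 1 0 = 0 := by norm_num [S1]
lemma s2v210 (t : ℂ) : S2 t 2 1 0 = 0 := by norm_num [S2]
lemma s1v211 (t : ℂ) : S1 t 2 1 1 = 0 := by norm_num [S1]
lemma s2v211 (t : ℂ) : S2 t 2 1 1 = 0 := by norm_num [S2]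
lemma s1v212 (t : ℂ) : S1 t 2 1 2 = 0 := by norm_num [S1]
lemma s2v212 (t : ℂ) : S2 t 2 1 2 = 0 := by norm_num [S2]
lemma s1v220 (t : ℂ) : S1 t 2 2 0 = 0 := by norm_num [S1]
lemma s2v220 (t : ℂ) : S2 t 2 2 0 = 0 := by norm_num [S2]
lemma s1v221 (t : ℂ) : S1 t 2 2 1 = -2 * t ^ 3 := by norm_num [S1]
lemma s2v221 (t : ℂ) : S2 t 2 2 1 = 0 := by norm_num [S2]
lemma s1v222 (t : ℂ) : S1 t 2 2 2 = t ^ 2 := by norm_num [S1]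
lemma s2v222 (t : ℂ) : S2 t 2 2 2 = 0 := by norm_num [S2]

lemma dec_S1 (t : ℂ) (ht : t ≠ 0) : Dec (S1 t) 4 := by
  refine ⟨fun p i => (cc p * t) ^ (i : ℕ), fun p j => (cc p * t) ^ (j : ℕ),
    fun p k => W4 p k / t ^ (k : ℕ), ?_⟩
  intro i j k
  fin_cases i <;> fin_cases j <;> fin_cases k <;>
    simp only [fk3_0, fk3_1, fk3_2, s1v000, s1v001, s1v002, s1v010, s1v011, s1v012, s1v020, s1v021, s1v022, s1v100, s1v101, s1v102, s1v110, s1v111, s1v112, s1v120, s1v121, s1v122, s1v200, s1v201, s1v202, s1v210, s1v211, s1v212, s1v220, s1v221, s1v222, Fin.sum_univ_four, v3_0, v3_1, v3_2, ccv0, ccv1, ccv2, ccv3, w4v00, w4v01, w4v02, w4v10, w4v11, w4v12, w4v20, w4v21, w4v22, w4v30, w4v31, w4v32, pow_zero, pow_one] <;> (try norm_num) <;> (try field_simp) <;> (try ring)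

lemma dec_S1_0 : Dec (S1 0) 5 := by
  refine ⟨fun p i => c5 p ^ (i : ℕ), fun p j => c5 p ^ (j : ℕ), fun p k => W5 p k, ?_⟩
  intro i j k
  fin_cases i <;> fin_cases j <;> fin_cases k <;>
    simp only [fk3_0, fk3_1, fk3_2, s1v000, s1v001, s1v002, s1v010, s1v011, s1v012, s1v020, s1v021, s1v022, s1v100, s1v101, s1v102, s1v110, s1v111, s1v112, s1v120, s1v121, s1v122, s1v200, s1v201, s1v202, s1v210, s1v211, s1v212, s1v220, s1v221, s1v222, Fin.sum_univ_five, v3_0, v3_1, v3_2, c5v0, c5v1, c5v2, c5v3, c5v4, w5v00, w5v01, w5v02, w5v10, w5v11, w5v12, w5v20, w5v21, w5v22, w5v30, w5v31, w5v32, w5v40, w5v41, w5v42, pow_zero, pow_one] <;> (try norm_num) <;> (try ring)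

lemma dec_S2 (t : ℂ) : Dec (S2 t) 4 := by
  refine ⟨fun p i => if (i : ℕ) = 0 then t else if (i : ℕ) = 1 then cc p else 0,
    fun p j => cc p ^ (j : ℕ), fun p k => W4 p k, ?_⟩
  intro i j k
  fin_cases i <;> fin_cases j <;> fin_cases k <;>
    simp only [fk3_0, fk3_1, fk3_2, s2v000, s2v001, s2v002, s2v010, s2v011, s2v012, s2v020, s2v021, s2v022, s2v100, s2v101, s2v102, s2v110, s2v111, s2v112, s2v120, s2v121, s2v122, s2v200, s2v201, s2v202, s2v210, s2v211, s2v212, s2v220, s2v221, s2v222, Fin.sum_univ_four, v3_0, v3_1, v3_2, ccv0, ccv1, ccv2, ccv3, w4v00, w4v01, w4v02, w4v10, w4v11, w4v12, w4v20, w4v21, w4v22, w4v30, w4v31, w4v32, pow_zero, pow_one] <;> (try norm_num) <;> (try ring)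

lemma dec_S2_0 : Dec (S2 0) 2 := by
  refine ⟨fun p i => if (i : ℕ) = 1 then 1 else 0,
    fun p j => if (j : ℕ) = (p : ℕ) then 1 else 0,
    fun p k => if (k : ℕ) = (p : ℕ) + 1 then 1 else 0, ?_⟩
  intro i j k
  fin_cases i <;> fin_cases j <;> fin_cases k <;>
    simp only [fk3_0, fk3_1, fk3_2, s2v000, s2v001, s2v002, s2v010, s2v011, s2v012, s2v020, s2v021, s2v022, s2v100, s2v101, s2v102, s2v110, s2v111, s2v112, s2v120, s2v121, s2v122, s2v200, s2v201, s2v202, s2v210, s2v211, s2v212, s2v220, s2v221, s2v222, Fin.sum_univ_two, v3_0, v3_1, v3_2, v2_0, v2_1, pow_zero, pow_one] <;> (try norm_num)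

/-! ### Lower bounds -/

lemma not_dec_S2_1 : ¬ Dec (S2 0) 1 := by
  rintro ⟨u, v, w, h⟩
  have h1 := h 1 0 1
  have h2 := h 1 1 2
  have h3 := h 1 0 2
  simp only [Fin.sum_univ_one] at h1 h2 h3
  have e1 : S2 0 1 0 1 = 1 := by norm_num [S2]
  have e2 : S2 0 1 1 2 = 1 := by norm_num [S2]
  have e3 : S2 0 1 0 2 = 0 := by norm_num [S2]
  rw [e1] at h1
  rw [e2] at h2
  rw [e3] at h3
  have : (1 : ℂ) = 0 := by
    linear_combination (u 0 1 * v 0 1 * w 0 2) * h1 + h2 - (u 0 1 * v 0 1 * w 0 1) * h3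
  exact one_ne_zero this

lemma not_dec_S2_3 (t : ℂ) (ht : t ≠ 0) : ¬ Dec (S2 t) 3 := by
  rintro ⟨u, v, w, h⟩
  have hA : ∀ j k, (∑ q : Fin 3, u q 0 * v q j * w q k) = S2 t 0 j k :=
    fun j k => (h 0 j k).symm
  have hB : ∀ j k, (∑ q : Fin 3, u q 1 * v q j * w q k) = S2 t 1 j k :=
    fun j k => (h 1 j k).symm
  have hb : ∀ p : Fin 3, u p 1 = 0 := by
    intro p
    have h0 := core3 (fun q => u q 0) (fun q => u q 1) v w _ _ hA hB p
    have h1 : det3 (fun j k => u p 0 * S2 t 1 j k - u p 1 * S2 t 0 j k)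
        = -(u p 1 * t) ^ 3 := by
      norm_num [det3, S2]
      try ring
    rw [h1] at h0
    have h3 : (u p 1 * t) ^ 3 = 0 := neg_eq_zero.mp h0
    have h4 : u p 1 * t = 0 := pow_eq_zero_iff (by norm_num) |>.mp h3
    exact (mul_eq_zero.mp h4).resolve_right ht
  have h101 := h 1 0 1
  rw [Fin.sum_univ_three, hb 0, hb 1, hb 2] at h101
  norm_num [S2] at h101

lemma not_dec_S1_4 : ¬ Dec (S1 0) 4 := by
  rintro ⟨u, v, w, h⟩
  have hex : ∃ p, u p 2 ≠ 0 := by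
    by_contra hall
    push_neg at hall
    have h202 := h 2 0 2
    rw [Fin.sum_univ_four, hall 0, hall 1, hall 2, hall 3] at h202
    norm_num [S1] at h202
  obtain ⟨p₀, hp0⟩ := hex
  set l0 : ℂ := u p₀ 0 / u p₀ 2 with hl0
  set l1 : ℂ := u p₀ 1 / u p₀ 2 with hl1
  set a : Fin 4 → ℂ := fun q => u q 0 - l0 * u q 2 with hadef
  set b : Fin 4 → ℂ := fun q => u q 1 - l1 * u q 2 with hbdef
  have ha0 : a p₀ = 0 := by
    simp only [hadef, hl0]
    field_simp
    ring
  have hb0 : b p₀ = 0 := by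
    simp only [hbdef, hl1]
    field_simp
    ring
  have hA : ∀ j k, (∑ q : Fin 4, a q * v q j * w q k)
      = S1 0 0 j k - l0 * S1 0 2 j k := by
    intro j k
    rw [h 0 j k, h 2 j k]
    simp only [Fin.sum_univ_four, hadef]
    ring
  have hB : ∀ j k, (∑ q : Fin 4, b q * v q j * w q k)
      = S1 0 1 j k - l1 * S1 0 2 j k := by
    intro j k
    rw [h 1 j k, h 2 j k]
    simp only [Fin.sum_univ_four, hbdef]
    ring
  have hb : ∀ p, b p = 0 := by
    intro p
    have h0 := core4 a b v w _ _ hA hB p₀ p ha0 hb0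
    have h1 : det3 (fun j k => a p * (S1 0 1 j k - l1 * S1 0 2 j k)
        - b p * (S1 0 0 j k - l0 * S1 0 2 j k)) = -(b p) ^ 3 := by
      norm_num [det3, S1]
      try ring
    rw [h1] at h0
    exact pow_eq_zero_iff (by norm_num) |>.mp (neg_eq_zero.mp h0)
  have hu1 : ∀ q, u q 1 = l1 * u q 2 := by
    intro q
    have hq := hb q
    simp only [hbdef] at hq
    linear_combination hq
  have h101 := h 1 0 1
  have h201 := h 2 0 1
  rw [Fin.sum_univ_four, hu1 0, hu1 1, hu1 2, hu1 3] at h101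
  rw [Fin.sum_univ_four] at h201
  have e1 : S1 0 1 0 1 = 1 := by norm_num [S1]
  have e2 : S1 0 2 0 1 = 0 := by norm_num [S1]
  rw [e1] at h101
  rw [e2] at h201
  have : (1 : ℂ) = 0 := by linear_combination h101 - l1 * h201
  exact one_ne_zero this

lemma rank_S1_0 : tensorRank (S1 0) = 5 := rank_eq dec_S1_0 not_dec_S1_4

end Stmt19

open Stmt19 in
theorem stmt_19 :
    ¬ IsClosed {T : Fin 3 → Fin 3 → Fin 3 → ℂ | tensorRank T ≤ 4} ∧
    (∃ S : ℂ → (Fin 3 → Fin 3 → Fin 3 → ℂ), Continuous S ∧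
      (∀ t : ℂ, t ≠ 0 → tensorRank (S t) ≤ 4) ∧ tensorRank (S 0) = 5) ∧
    (∃ S : ℂ → (Fin 3 → Fin 3 → Fin 3 → ℂ), Continuous S ∧
      (∀ t : ℂ, t ≠ 0 → tensorRank (S t) = 4) ∧ tensorRank (S 0) = 2) := by
  refine ⟨?_, ⟨S1, contS1, fun t ht => rank_le (dec_S1 t ht), rank_S1_0⟩,
    ⟨S2, contS2, fun t ht => rank_eq (dec_S2 t) (not_dec_S2_3 t ht),
      rank_eq dec_S2_0 not_dec_S2_1⟩⟩
  intro hcl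
  haveI : (nhdsWithin (0 : ℂ) {x | x ≠ 0}).NeBot := Module.punctured_nhds_neBot ℂ ℂ 0
  have htend : Filter.Tendsto S1 (nhdsWithin (0 : ℂ) {x | x ≠ 0}) (nhds (S1 0)) :=
    (contS1.tendsto 0).mono_left nhdsWithin_le_nhds
  have hmem : S1 0 ∈ {T : Fin 3 → Fin 3 → Fin 3 → ℂ | tensorRank T ≤ 4} :=
    hcl.mem_of_tendsto htend
      (eventually_nhdsWithin_of_forall fun t ht => rank_le (dec_S1 t ht))
  have : tensorRank (S1 0) ≤ 4 := hmem
  rw [rank_S1_0] at this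
  omega
end
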